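/- arXiv:0805.1679 — 3 statements merged into one kernel-verified Lean document; each statement's English description precedes it below -/
import Mathlib

section
/- Let U ⊆ ℝⁿ be open, let π be a Poisson matrix on U, let F = (f_1, …, f_s): U → ℝ^s be smooth with {f_i, f_j} = 0 on U for all i,j ∈ {1,…,s}, let μ_1, …, μ_k: ℝ^s → ℝ be smooth functions (k ≤ s), and define the vector field Y := Σ_{j=1}^k (μ_j ∘ F) · X_{f_j} on U. Then L_Y(L_Y π) = 0 on U, i.e. the Lie derivative along Y of the matrix field L_Y π vanishes identically. -/
/-- Partial derivative of `f : ℝⁿ → ℝ` in the `i`-th coordinate direction. -/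
noncomputable def pd {n : ℕ} (i : Fin n) (f : (Fin n → ℝ) → ℝ) (x : Fin n → ℝ) : ℝ :=
  fderiv ℝ f x (Pi.single i 1)

/-- A smooth antisymmetric matrix field satisfying the Jacobi identity on `U`. -/
def IsPoissonMatrix {n : ℕ} (P : (Fin n → ℝ) → Matrix (Fin n) (Fin n) ℝ)
    (U : Set (Fin n → ℝ)) : Prop :=
  (∀ i j, ContDiffOn ℝ (⊤ : ℕ∞) (fun x => P x i j) U) ∧
  (∀ x ∈ U, ∀ i j, P x i j = -P x j i) ∧
  (∀ x ∈ U, ∀ i j k, ∑ l, (P x l k * pd l (fun y => P y i j) x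
      + P x l i * pd l (fun y => P y j k) x
      + P x l j * pd l (fun y => P y k i) x) = 0)

/-- The Poisson bracket `{f,g} = Σ_{i,j} π^{ij} ∂f/∂x_i ∂g/∂x_j`. -/
noncomputable def pbrak {n : ℕ} (P : (Fin n → ℝ) → Matrix (Fin n) (Fin n) ℝ)
    (f g : (Fin n → ℝ) → ℝ) (x : Fin n → ℝ) : ℝ :=
  ∑ i, ∑ j, P x i j * pd i f x * pd j g x

/-- The Hamiltonian vector field `X_f`, with components `X_f^i = Σ_j π^{ij} ∂f/∂x_j`. -/
noncomputable def ham {n : ℕ} (P : (Fin n → ℝ) → Matrix (Fin n) (Fin n) ℝ)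
    (f : (Fin n → ℝ) → ℝ) (x : Fin n → ℝ) : Fin n → ℝ :=
  fun i => ∑ j, P x i j * pd j f x


/-- The Lie derivative `L_Y P` of an antisymmetric matrix field `P` along a vector field `Y`. -/
noncomputable def lieDer {n : ℕ} (Y : (Fin n → ℝ) → (Fin n → ℝ))
    (P : (Fin n → ℝ) → Matrix (Fin n) (Fin n) ℝ) (x : Fin n → ℝ) :
    Matrix (Fin n) (Fin n) ℝ :=
  Matrix.of fun i k =>
    ∑ l, (Y x l * pd l (fun y => P y i k) x
      - P x l k * pd l (fun y => Y y i) x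
      - P x i l * pd l (fun y => Y y k) x)

namespace LSqAux

open Filter

variable {n : ℕ}

lemma pd_congr {U : Set (Fin n → ℝ)} (hU : IsOpen U) {a b : (Fin n → ℝ) → ℝ}
    (h : ∀ y ∈ U, a y = b y) {x : Fin n → ℝ} (hx : x ∈ U) (i : Fin n) :
    pd i a x = pd i b x := by
  unfold pd
  rw [Filter.EventuallyEq.fderiv_eq (Filter.eventually_of_mem (hU.mem_nhds hx) h)]

lemma pd_const (c : ℝ) (i : Fin n) (x : Fin n → ℝ) : pd i (fun _ => c) x = 0 := by
  simp [pd]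

lemma pd_zero_of_eqOn {U : Set (Fin n → ℝ)} (hU : IsOpen U) {a : (Fin n → ℝ) → ℝ}
    (h : ∀ y ∈ U, a y = 0) {x : Fin n → ℝ} (hx : x ∈ U) (i : Fin n) :
    pd i a x = 0 := by
  rw [pd_congr hU (b := fun _ => (0:ℝ)) h hx i, pd_const]

lemma pd_mul {a b : (Fin n → ℝ) → ℝ} {x : Fin n → ℝ}
    (ha : DifferentiableAt ℝ a x) (hb : DifferentiableAt ℝ b x) (i : Fin n) :
    pd i (fun y => a y * b y) x = pd i a x * b x + a x * pd i b x := by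
  unfold pd
  rw [fderiv_fun_mul ha hb]
  simp [add_comm, mul_comm]

lemma pd_sum {ι : Type*} (u : Finset ι) {A : ι → (Fin n → ℝ) → ℝ} {x : Fin n → ℝ}
    (hA : ∀ j ∈ u, DifferentiableAt ℝ (A j) x) (i : Fin n) :
    pd i (fun y => ∑ j ∈ u, A j y) x = ∑ j ∈ u, pd i (A j) x := by
  unfold pd
  rw [fderiv_fun_sum hA]
  simp

lemma pd_neg {a : (Fin n → ℝ) → ℝ} {x : Fin n → ℝ} (i : Fin n) :
    pd i (fun y => -a y) x = -pd i a x := by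
  unfold pd
  rw [fderiv_fun_neg]
  simp

/-- A continuous linear functional on `Fin n → ℝ` is determined by basis values. -/
lemma clm_eq_sum (φ : (Fin n → ℝ) →L[ℝ] ℝ) (w : Fin n → ℝ) :
    φ w = ∑ p, w p * φ (Pi.single p 1) := by
  have hw : w = ∑ p, w p • (Pi.single p (1:ℝ) : Fin n → ℝ) := by
    conv_lhs => rw [← Finset.univ_sum_single w]
    refine Finset.sum_congr rfl fun p _ => ?_
    ext j
    by_cases h : j = p <;> simp [Pi.single_apply, h]
  conv_lhs => rw [hw]
  rw [map_sum]
  refine Finset.sum_congr rfl fun p _ => ?_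
  rw [map_smul]
  simp

/-- Chain rule: `pd` of `h ∘ F` where `F = (f₁, …, f_s)`. -/
lemma pd_comp {s : ℕ} {h : (Fin s → ℝ) → ℝ} {f : Fin s → (Fin n → ℝ) → ℝ} {x : Fin n → ℝ}
    (hh : DifferentiableAt ℝ h (fun p => f p x)) (hf : ∀ p, DifferentiableAt ℝ (f p) x)
    (l : Fin n) :
    pd l (fun y => h (fun p => f p y)) x
      = ∑ p, pd p h (fun p => f p x) * pd l (f p) x := by
  have hF : DifferentiableAt ℝ (fun y (p : Fin s) => f p y) x := differentiableAt_pi.mpr hf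
  have key : pd l (fun y => h (fun p => f p y)) x
      = fderiv ℝ h (fun p => f p x) (fun p => pd l (f p) x) := by
    unfold pd
    have := fderiv_comp (𝕜 := ℝ) x (f := fun y (p : Fin s) => f p y) (g := h) hh hF
    rw [show (fun y => h (fun p => f p y)) = h ∘ (fun y (p : Fin s) => f p y) from rfl, this]
    rw [ContinuousLinearMap.comp_apply]
    congr 1
    rw [fderiv_pi hf]
    rfl
  rw [key, clm_eq_sum]
  exact Finset.sum_congr rfl fun p _ => mul_comm _ _

/-- Clairaut/Schwarz: symmetry of second partial derivatives for `C^∞` functions. -/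
lemma pd_comm {h : (Fin n → ℝ) → ℝ} {x : Fin n → ℝ} (hh : ContDiffAt ℝ (⊤ : ℕ∞) h x)
    (l q : Fin n) : pd l (pd q h) x = pd q (pd l h) x := by
  have hd : DifferentiableAt ℝ (fderiv ℝ h) x :=
    (hh.fderiv_right (m := (⊤ : ℕ∞)) ((by simp))).differentiableAt (by simp)
  have key : ∀ a b : Fin n, pd a (pd b h) x
      = fderiv ℝ (fderiv ℝ h) x (Pi.single a 1) (Pi.single b 1) := by
    intro a b
    unfold pd
    rw [fderiv_clm_apply hd (differentiableAt_const _)]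
    simp
  rw [key, key]
  exact (hh.isSymmSndFDerivAt (by rw [minSmoothness_of_isRCLikeNormedField]; exact WithTop.coe_le_coe.mpr (le_top : (2 : ℕ∞) ≤ ⊤))) _ _

/-- `pd` of a smooth function is smooth. -/
lemma contDiffAt_pd {h : (Fin n → ℝ) → ℝ} {x : Fin n → ℝ} (hh : ContDiffAt ℝ (⊤ : ℕ∞) h x)
    (i : Fin n) : ContDiffAt ℝ (⊤ : ℕ∞) (pd i h) x := by
  have : ContDiffAt ℝ (⊤ : ℕ∞) (fderiv ℝ h) x := hh.fderiv_right (by simp)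
  exact this.clm_apply contDiffAt_const

lemma contDiff_pd {h : (Fin n → ℝ) → ℝ} (hh : ContDiff ℝ (⊤ : ℕ∞) h) (i : Fin n) :
    ContDiff ℝ (⊤ : ℕ∞) (pd i h) := by
  have : ContDiff ℝ (⊤ : ℕ∞) (fderiv ℝ h) := hh.fderiv_right (by simp)
  exact this.clm_apply contDiff_const

end LSqAux





namespace LSqAux

/-- `C^∞` at every point of `U`. -/
def SOn {n : ℕ} (U : Set (Fin n → ℝ)) (h : (Fin n → ℝ) → ℝ) : Prop :=
  ∀ x ∈ U, ContDiffAt ℝ (⊤ : ℕ∞) h x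

variable {n s : ℕ} {U : Set (Fin n → ℝ)}

lemma SOn.diff {a : (Fin n → ℝ) → ℝ} (ha : SOn U a) {x : Fin n → ℝ} (hx : x ∈ U) :
    DifferentiableAt ℝ a x := (ha x hx).differentiableAt (by simp)

lemma SOn.mul {a b : (Fin n → ℝ) → ℝ} (ha : SOn U a) (hb : SOn U b) :
    SOn U (fun y => a y * b y) := fun x hx => (ha x hx).mul (hb x hx)

lemma SOn.sum {ι : Type*} (u : Finset ι) {A : ι → (Fin n → ℝ) → ℝ}
    (h : ∀ j ∈ u, SOn U (A j)) : SOn U (fun y => ∑ j ∈ u, A j y) := by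
  classical
  induction u using Finset.induction_on with
  | empty => intro x hx; simpa using contDiffAt_const (c := (0:ℝ))
  | @insert j u' hni ih =>
    intro x hx
    have h1 := h j (Finset.mem_insert_self j u') x hx
    have h2 := ih (fun i hi => h i (Finset.mem_insert_of_mem hi)) x hx
    simpa [Finset.sum_insert hni] using h1.add h2

lemma SOn.pd {a : (Fin n → ℝ) → ℝ} (ha : SOn U a) (i : Fin n) :
    SOn U (pd i a) := fun x hx => contDiffAt_pd (ha x hx) i

lemma SOn.comp {h : (Fin s → ℝ) → ℝ} (hh : ContDiff ℝ (⊤ : ℕ∞) h)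
    {f : Fin s → (Fin n → ℝ) → ℝ} (hf : ∀ p, SOn U (f p)) :
    SOn U (fun y => h (fun p => f p y)) := by
  intro x hx
  exact (hh.contDiffAt).comp x (contDiffAt_pi.mpr (fun p => hf p x hx))

section PoissonBasic

variable (hU : IsOpen U) {P : (Fin n → ℝ) → Matrix (Fin n) (Fin n) ℝ}
  (hP : IsPoissonMatrix P U)

include hU hP

lemma smP (i j : Fin n) : SOn U (fun y => P y i j) :=
  fun x hx => (hP.1 i j).contDiffAt (hU.mem_nhds hx)

/-- `pd` of the antisymmetry relation. -/
lemma pdP_antisym {x : Fin n → ℝ} (hx : x ∈ U) (l i j : Fin n) :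
    pd l (fun y => P y i j) x = -pd l (fun y => P y j i) x := by
  have : pd l (fun y => P y i j) x = pd l (fun y => -P y j i) x :=
    pd_congr hU (fun y hy => hP.2.1 y hy i j) hx l
  rw [this, pd_neg]

/-- Jacobi identity, variant 1: used for `L_{X_f} π = 0`. -/
lemma jac1 {x : Fin n → ℝ} (hx : x ∈ U) (i k q : Fin n) :
    ∑ l, (P x l q * pd l (fun y => P y i k) x
      - P x l k * pd l (fun y => P y i q) x
      - P x i l * pd l (fun y => P y k q) x) = 0 := by
  have h := hP.2.2 x hx i k q
  rw [← h]
  refine Finset.sum_congr rfl fun l _ => ?_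
  rw [pdP_antisym hU hP hx l q i, hP.2.1 x hx l i]
  ring

/-- Jacobi identity, variant 2: used for `[X_f, X_g] = X_{{f,g}}`. -/
lemma jac2 {x : Fin n → ℝ} (hx : x ∈ U) (i q p : Fin n) :
    ∑ l, (P x l p * pd l (fun y => P y i q) x
      - P x l q * pd l (fun y => P y i p) x
      + P x i l * pd l (fun y => P y p q) x) = 0 := by
  have h := hP.2.2 x hx i q p
  rw [← h]
  refine Finset.sum_congr rfl fun l _ => ?_
  rw [pdP_antisym hU hP hx l q p, pdP_antisym hU hP hx l p i, hP.2.1 x hx l i]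
  ring

end PoissonBasic

end LSqAux

namespace LSqAux

section Ham

variable {n s : ℕ} {U : Set (Fin n → ℝ)} (hU : IsOpen U)
  {P : (Fin n → ℝ) → Matrix (Fin n) (Fin n) ℝ} (hP : IsPoissonMatrix P U)
  {f : Fin s → (Fin n → ℝ) → ℝ} (hfs : ∀ i, ContDiffOn ℝ (⊤ : ℕ∞) (f i) U)

/-- Triple sum: swap outer two. -/
lemma sum_comm12 {α β γ M : Type*} [Fintype α] [Fintype β] [Fintype γ] [AddCommMonoid M]
    (t : α → β → γ → M) :
    ∑ a, ∑ b, ∑ c, t a b c = ∑ b, ∑ a, ∑ c, t a b c := Finset.sum_comm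

/-- Triple sum: swap inner two. -/
lemma sum_comm23 {α β γ M : Type*} [Fintype α] [Fintype β] [Fintype γ] [AddCommMonoid M]
    (t : α → β → γ → M) :
    ∑ a, ∑ b, ∑ c, t a b c = ∑ a, ∑ c, ∑ b, t a b c :=
  Finset.sum_congr rfl fun _ _ => Finset.sum_comm

include hU hP hfs

lemma smf (a : Fin s) : SOn U (f a) :=
  fun x hx => (hfs a).contDiffAt (hU.mem_nhds hx)

lemma smX (a : Fin s) (i : Fin n) : SOn U (fun y => ham P (f a) y i) := by
  have : (fun y => ham P (f a) y i) = fun y => ∑ q, P y i q * pd q (f a) y := rfl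
  rw [this]
  exact SOn.sum Finset.univ fun q _ => (smP hU hP i q).mul ((smf hU hP hfs a).pd q)

lemma schwarz_f {x : Fin n → ℝ} (hx : x ∈ U) (a : Fin s) (l q : Fin n) :
    pd l (pd q (f a)) x = pd q (pd l (f a)) x :=
  pd_comm (smf hU hP hfs a x hx) l q

/-- Expansion of the derivative of a component of a Hamiltonian vector field. -/
lemma pd_ham {x : Fin n → ℝ} (hx : x ∈ U) (a : Fin s) (l i : Fin n) :
    pd l (fun y => ham P (f a) y i) x
      = ∑ q, (pd l (fun y => P y i q) x * pd q (f a) x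
          + P x i q * pd l (pd q (f a)) x) := by
  have h1 : (fun y => ham P (f a) y i) = fun y => ∑ q, P y i q * pd q (f a) y := rfl
  rw [h1, pd_sum Finset.univ
    (fun q _ => (((smP hU hP i q).mul ((smf hU hP hfs a).pd q))).diff hx) l]
  exact Finset.sum_congr rfl fun q _ =>
    pd_mul ((smP hU hP i q).diff hx) (((smf hU hP hfs a).pd q).diff hx) l

/-- `X_{f_a} f_b = {f_b, f_a} = 0` for an involutive family. -/
lemma ham_pd_f (hinv : ∀ i j, ∀ x ∈ U, pbrak P (f i) (f j) x = 0)
    {x : Fin n → ℝ} (hx : x ∈ U) (a b : Fin s) :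
    ∑ l, ham P (f a) x l * pd l (f b) x = 0 := by
  have h := hinv b a x hx
  unfold pbrak at h
  rw [← h]
  refine Finset.sum_congr rfl fun l _ => ?_
  show (∑ q, P x l q * pd q (f a) x) * pd l (f b) x = _
  rw [Finset.sum_mul]
  exact Finset.sum_congr rfl fun q _ => by ring

/-- `L_{X_{f_a}} π = 0`: the Lie derivative of a Poisson structure along a Hamiltonian
vector field vanishes. -/
lemma lie_ham_P {x : Fin n → ℝ} (hx : x ∈ U) (a : Fin s) (i k : Fin n) :
    ∑ l, (ham P (f a) x l * pd l (fun y => P y i k) x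
      - P x l k * pd l (fun y => ham P (f a) y i) x
      - P x i l * pd l (fun y => ham P (f a) y k) x) = 0 := by
  have step : ∑ l, (ham P (f a) x l * pd l (fun y => P y i k) x
      - P x l k * pd l (fun y => ham P (f a) y i) x
      - P x i l * pd l (fun y => ham P (f a) y k) x)
      = ∑ l, ∑ q, (pd q (f a) x *
          (P x l q * pd l (fun y => P y i k) x
            - P x l k * pd l (fun y => P y i q) x
            - P x i l * pd l (fun y => P y k q) x)
          - (P x l k * P x i q + P x i l * P x k q) * pd l (pd q (f a)) x) := by
    refine Finset.sum_congr rfl fun l _ => ?_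
    rw [pd_ham hU hP hfs hx a l i, pd_ham hU hP hfs hx a l k]
    show (∑ q, P x l q * pd q (f a) x) * _ - _ - _ = _
    rw [Finset.sum_mul, Finset.mul_sum, Finset.mul_sum, ← Finset.sum_sub_distrib,
      ← Finset.sum_sub_distrib]
    exact Finset.sum_congr rfl fun q _ => by ring
  rw [step]
  have hsplit : ∑ l, ∑ q, (pd q (f a) x *
          (P x l q * pd l (fun y => P y i k) x
            - P x l k * pd l (fun y => P y i q) x
            - P x i l * pd l (fun y => P y k q) x)
          - (P x l k * P x i q + P x i l * P x k q) * pd l (pd q (f a)) x)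
      = (∑ l, ∑ q, pd q (f a) x *
          (P x l q * pd l (fun y => P y i k) x
            - P x l k * pd l (fun y => P y i q) x
            - P x i l * pd l (fun y => P y k q) x))
        - ∑ l, ∑ q, (P x l k * P x i q + P x i l * P x k q) * pd l (pd q (f a)) x := by
    simp [Finset.sum_sub_distrib]
  rw [hsplit]
  have hJ : (∑ l, ∑ q, pd q (f a) x *
          (P x l q * pd l (fun y => P y i k) x
            - P x l k * pd l (fun y => P y i q) x
            - P x i l * pd l (fun y => P y k q) x)) = 0 := by
    rw [Finset.sum_comm]
    refine Finset.sum_eq_zero fun q _ => ?_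
    rw [← Finset.mul_sum, jac1 hU hP hx i k q, mul_zero]
  have hS : (∑ l, ∑ q, (P x l k * P x i q + P x i l * P x k q) * pd l (pd q (f a)) x) = 0 := by
    have hsw : ∑ l, ∑ q, P x i l * P x k q * pd l (pd q (f a)) x
        = ∑ l, ∑ q, P x i q * P x k l * pd l (pd q (f a)) x := by
      rw [Finset.sum_comm]
      refine Finset.sum_congr rfl fun l _ => Finset.sum_congr rfl fun q _ => ?_
      rw [schwarz_f hU hP hfs hx a q l]
    have expand : ∑ l, ∑ q, (P x l k * P x i q + P x i l * P x k q) * pd l (pd q (f a)) x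
        = (∑ l, ∑ q, P x l k * P x i q * pd l (pd q (f a)) x)
          + ∑ l, ∑ q, P x i l * P x k q * pd l (pd q (f a)) x := by
      simp only [add_mul, Finset.sum_add_distrib]
    rw [expand, hsw, ← Finset.sum_add_distrib]
    refine Finset.sum_eq_zero fun l _ => ?_
    rw [← Finset.sum_add_distrib]
    refine Finset.sum_eq_zero fun q _ => ?_
    rw [hP.2.1 x hx l k]
    ring
  rw [hJ, hS, sub_zero]

end Ham

end LSqAux

namespace LSqAux

section Ham2

variable {n s : ℕ} {U : Set (Fin n → ℝ)} (hU : IsOpen U)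
  {P : (Fin n → ℝ) → Matrix (Fin n) (Fin n) ℝ} (hP : IsPoissonMatrix P U)
  {f : Fin s → (Fin n → ℝ) → ℝ} (hfs : ∀ i, ContDiffOn ℝ (⊤ : ℕ∞) (f i) U)

/-- Triple sum: cyclic rotation. -/
lemma sum_rot {α β γ M : Type*} [Fintype α] [Fintype β] [Fintype γ] [AddCommMonoid M]
    (t : α → β → γ → M) :
    ∑ a, ∑ b, ∑ c, t a b c = ∑ b, ∑ c, ∑ a, t a b c :=
  (sum_comm12 t).trans (sum_comm23 fun b a c => t a b c)

/-- Triple sum: swap outer and inner. -/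
lemma sum_swap13 {α β γ M : Type*} [Fintype α] [Fintype β] [Fintype γ] [AddCommMonoid M]
    (t : α → β → γ → M) :
    ∑ a, ∑ b, ∑ c, t a b c = ∑ c, ∑ b, ∑ a, t a b c :=
  ((sum_comm12 t).trans (sum_comm23 fun b a c => t a b c)).trans
    (sum_comm12 fun b c a => t a b c)

include hU hP hfs

/-- Expansion of the derivative of the Poisson bracket of two functions. -/
lemma pd_pbrak {x : Fin n → ℝ} (hx : x ∈ U) (a b : Fin s) (c : Fin n) :
    pd c (pbrak P (f a) (f b)) x
      = ∑ p, ∑ r, (pd c (fun y => P y p r) x * pd p (f a) x * pd r (f b) x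
          + P x p r * pd c (pd p (f a)) x * pd r (f b) x
          + P x p r * pd p (f a) x * pd c (pd r (f b)) x) := by
  have sfa := smf hU hP hfs a
  have sfb := smf hU hP hfs b
  have hin : ∀ p r : Fin n, SOn U (fun y => P y p r * pd p (f a) y * pd r (f b) y) :=
    fun p r => ((smP hU hP p r).mul (sfa.pd p)).mul (sfb.pd r)
  have h1 : pbrak P (f a) (f b)
      = fun y => ∑ p, ∑ r, P y p r * pd p (f a) y * pd r (f b) y := rfl
  rw [h1, pd_sum Finset.univ
    (fun p _ => (SOn.sum Finset.univ (fun r _ => hin p r)).diff hx) c]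
  refine Finset.sum_congr rfl fun p _ => ?_
  rw [pd_sum Finset.univ (fun r _ => (hin p r).diff hx) c]
  refine Finset.sum_congr rfl fun r _ => ?_
  rw [pd_mul (((smP hU hP p r).mul (sfa.pd p)).diff hx) ((sfb.pd r).diff hx) c,
    pd_mul ((smP hU hP p r).diff hx) ((sfa.pd p).diff hx) c]
  ring

/-- `[X_{f_a}, X_{f_b}] = 0` for an involutive family. -/
lemma ham_bracket (hinv : ∀ i j, ∀ x ∈ U, pbrak P (f i) (f j) x = 0)
    {x : Fin n → ℝ} (hx : x ∈ U) (a b : Fin s) (i : Fin n) :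
    ∑ l, (ham P (f a) x l * pd l (fun y => ham P (f b) y i) x
      - ham P (f b) x l * pd l (fun y => ham P (f a) y i) x) = 0 := by
  -- vanishing of the expanded X_{{f_a, f_b}}
  have hV : (∑ c, ∑ p, ∑ r, P x i c * pd c (fun y => P y p r) x * pd p (f a) x * pd r (f b) x)
      + (∑ c, ∑ p, ∑ r, P x i c * P x p r * pd c (pd p (f a)) x * pd r (f b) x)
      + (∑ c, ∑ p, ∑ r, P x i c * P x p r * pd p (f a) x * pd c (pd r (f b)) x) = 0 := by
    have hmain : ∑ c, ∑ p, ∑ r, (P x i c * pd c (fun y => P y p r) x * pd p (f a) x * pd r (f b) x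
        + P x i c * P x p r * pd c (pd p (f a)) x * pd r (f b) x
        + P x i c * P x p r * pd p (f a) x * pd c (pd r (f b)) x) = 0 := by
      refine Finset.sum_eq_zero fun c _ => ?_
      have hc : ∑ p, ∑ r, (P x i c * pd c (fun y => P y p r) x * pd p (f a) x * pd r (f b) x
          + P x i c * P x p r * pd c (pd p (f a)) x * pd r (f b) x
          + P x i c * P x p r * pd p (f a) x * pd c (pd r (f b)) x)
          = P x i c * pd c (pbrak P (f a) (f b)) x := by
        rw [pd_pbrak hU hP hfs hx a b c, Finset.mul_sum]
        refine Finset.sum_congr rfl fun p _ => ?_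
        rw [Finset.mul_sum]
        exact Finset.sum_congr rfl fun r _ => by ring
      rw [hc, pd_zero_of_eqOn hU (hinv a b) hx c, mul_zero]
    rw [← hmain]
    simp only [Finset.sum_add_distrib]
  -- expansion of the bracket into four triple sums
  have hD : ∑ l, (ham P (f a) x l * pd l (fun y => ham P (f b) y i) x
        - ham P (f b) x l * pd l (fun y => ham P (f a) y i) x)
      = (∑ l, ∑ p, ∑ q, P x l p * pd p (f a) x * pd l (fun y => P y i q) x * pd q (f b) x)
        + (∑ l, ∑ p, ∑ q, P x l p * pd p (f a) x * P x i q * pd l (pd q (f b)) x)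
        - ((∑ l, ∑ p, ∑ q, P x l p * pd p (f b) x * pd l (fun y => P y i q) x * pd q (f a) x)
          + ∑ l, ∑ p, ∑ q, P x l p * pd p (f b) x * P x i q * pd l (pd q (f a)) x) := by
    have step : ∑ l, (ham P (f a) x l * pd l (fun y => ham P (f b) y i) x
        - ham P (f b) x l * pd l (fun y => ham P (f a) y i) x)
        = ∑ l, ∑ p, ∑ q, ((P x l p * pd p (f a) x * pd l (fun y => P y i q) x * pd q (f b) x
            + P x l p * pd p (f a) x * P x i q * pd l (pd q (f b)) x)
          - (P x l p * pd p (f b) x * pd l (fun y => P y i q) x * pd q (f a) x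
            + P x l p * pd p (f b) x * P x i q * pd l (pd q (f a)) x)) := by
      refine Finset.sum_congr rfl fun l _ => ?_
      rw [pd_ham hU hP hfs hx b l i, pd_ham hU hP hfs hx a l i]
      show (∑ p, P x l p * pd p (f a) x) * _ - (∑ p, P x l p * pd p (f b) x) * _ = _
      rw [Finset.sum_mul, Finset.sum_mul, ← Finset.sum_sub_distrib]
      refine Finset.sum_congr rfl fun p _ => ?_
      rw [Finset.mul_sum, Finset.mul_sum, ← Finset.sum_sub_distrib]
      exact Finset.sum_congr rfl fun q _ => by ring
    rw [step]
    simp only [Finset.sum_add_distrib, Finset.sum_sub_distrib]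
  -- Jacobi part
  have hG1 : (∑ l, ∑ p, ∑ q, P x l p * pd p (f a) x * pd l (fun y => P y i q) x * pd q (f b) x)
      - (∑ l, ∑ p, ∑ q, P x l p * pd p (f b) x * pd l (fun y => P y i q) x * pd q (f a) x)
      + (∑ c, ∑ p, ∑ r, P x i c * pd c (fun y => P y p r) x * pd p (f a) x * pd r (f b) x)
      = 0 := by
    have hT3sw : (∑ l, ∑ p, ∑ q, P x l p * pd p (f b) x * pd l (fun y => P y i q) x * pd q (f a) x)
        = ∑ l, ∑ p, ∑ q, P x l q * pd q (f b) x * pd l (fun y => P y i p) x * pd p (f a) x :=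
      Finset.sum_congr rfl fun l _ => Finset.sum_comm
    rw [hT3sw]
    have hmerge : ∑ l, ∑ p, ∑ q, ((P x l p * pd p (f a) x * pd l (fun y => P y i q) x * pd q (f b) x
          - P x l q * pd q (f b) x * pd l (fun y => P y i p) x * pd p (f a) x)
          + P x i l * pd l (fun y => P y p q) x * pd p (f a) x * pd q (f b) x)
        = (∑ l, ∑ p, ∑ q, P x l p * pd p (f a) x * pd l (fun y => P y i q) x * pd q (f b) x)
          - (∑ l, ∑ p, ∑ q, P x l q * pd q (f b) x * pd l (fun y => P y i p) x * pd p (f a) x)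
          + (∑ c, ∑ p, ∑ r, P x i c * pd c (fun y => P y p r) x * pd p (f a) x * pd r (f b) x) := by
      simp only [Finset.sum_add_distrib, Finset.sum_sub_distrib]
    rw [← hmerge]
    refine Eq.trans (sum_rot _) ?_
    refine Finset.sum_eq_zero fun p _ => Finset.sum_eq_zero fun q _ => ?_
    have hcongr : ∀ l : Fin n, ((P x l p * pd p (f a) x * pd l (fun y => P y i q) x * pd q (f b) x
          - P x l q * pd q (f b) x * pd l (fun y => P y i p) x * pd p (f a) x)
          + P x i l * pd l (fun y => P y p q) x * pd p (f a) x * pd q (f b) x)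
        = (pd p (f a) x * pd q (f b) x)
          * (P x l p * pd l (fun y => P y i q) x - P x l q * pd l (fun y => P y i p) x
            + P x i l * pd l (fun y => P y p q) x) := fun l => by ring
    rw [Finset.sum_congr rfl fun l _ => hcongr l, ← Finset.mul_sum,
      jac2 hU hP hx i q p, mul_zero]
  -- first Schwarz part
  have hG2 : (∑ l, ∑ p, ∑ q, P x l p * pd p (f a) x * P x i q * pd l (pd q (f b)) x)
      + (∑ c, ∑ p, ∑ r, P x i c * P x p r * pd p (f a) x * pd c (pd r (f b)) x) = 0 := by
    have h1 : (∑ c, ∑ p, ∑ r, P x i c * P x p r * pd p (f a) x * pd c (pd r (f b)) x)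
        = ∑ c, ∑ p, ∑ r, -(P x i c * P x r p * pd p (f a) x * pd c (pd r (f b)) x) := by
      refine Finset.sum_congr rfl fun c _ => Finset.sum_congr rfl fun p _ =>
        Finset.sum_congr rfl fun r _ => ?_
      rw [hP.2.1 x hx p r]; ring
    have h2 : (∑ c, ∑ p, ∑ r, P x i c * P x r p * pd p (f a) x * pd c (pd r (f b)) x)
        = ∑ l, ∑ p, ∑ q, P x l p * pd p (f a) x * P x i q * pd l (pd q (f b)) x := by
      refine Eq.trans (sum_swap13 _) ?_
      refine Finset.sum_congr rfl fun l _ => Finset.sum_congr rfl fun p _ =>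
        Finset.sum_congr rfl fun q _ => ?_
      rw [pd_comm (smf hU hP hfs b x hx) q l]
      ring
    rw [h1]
    simp only [Finset.sum_neg_distrib]
    rw [h2]
    ring
  -- second Schwarz part
  have hG3 : (∑ c, ∑ p, ∑ r, P x i c * P x p r * pd c (pd p (f a)) x * pd r (f b) x)
      - (∑ l, ∑ p, ∑ q, P x l p * pd p (f b) x * P x i q * pd l (pd q (f a)) x) = 0 := by
    have h2 : (∑ c, ∑ p, ∑ r, P x i c * P x p r * pd c (pd p (f a)) x * pd r (f b) x)
        = ∑ l, ∑ p, ∑ q, P x l p * pd p (f b) x * P x i q * pd l (pd q (f a)) x := by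
      refine Eq.trans (sum_rot _) ?_
      refine Finset.sum_congr rfl fun l _ => Finset.sum_congr rfl fun p _ =>
        Finset.sum_congr rfl fun q _ => ?_
      rw [pd_comm (smf hU hP hfs a x hx) q l]
      ring
    rw [h2, sub_self]
  rw [hD]
  linarith [hV, hG1, hG2, hG3]

end Ham2

end LSqAux

namespace LSqAux

lemma SOn.sub {n : ℕ} {U : Set (Fin n → ℝ)} {a b : (Fin n → ℝ) → ℝ}
    (ha : SOn U a) (hb : SOn U b) : SOn U (fun y => a y - b y) :=
  fun x hx => (ha x hx).sub (hb x hx)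

section Main

variable {n s k : ℕ} (hk : k ≤ s) {U : Set (Fin n → ℝ)} (hU : IsOpen U)
  {P : (Fin n → ℝ) → Matrix (Fin n) (Fin n) ℝ} (hP : IsPoissonMatrix P U)
  {f : Fin s → (Fin n → ℝ) → ℝ} (hfs : ∀ i, ContDiffOn ℝ (⊤ : ℕ∞) (f i) U)
  {μ : Fin k → (Fin s → ℝ) → ℝ} (hμ : ∀ j, ContDiff ℝ (⊤ : ℕ∞) (μ j))
  (Y : (Fin n → ℝ) → Fin n → ℝ)
  (hY : ∀ y i, Y y i = ∑ j : Fin k, μ j (fun p => f p y)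
      * ham P (f (Fin.castLE hk j)) y i)

include hU hP hfs hμ hY

lemma smg (j : Fin k) : SOn U (fun y => μ j (fun p => f p y)) :=
  SOn.comp (hμ j) (fun p => smf hU hP hfs p)

lemma smc (j : Fin k) (m : Fin s) :
    SOn U (fun y => pd m (μ j) (fun p => f p y)) :=
  SOn.comp (contDiff_pd (hμ j) m) (fun p => smf hU hP hfs p)

lemma pd_g {x : Fin n → ℝ} (hx : x ∈ U) (j : Fin k) (l : Fin n) :
    pd l (fun y => μ j (fun p => f p y)) x
      = ∑ m, pd m (μ j) (fun p => f p x) * pd l (f m) x :=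
  pd_comp (((hμ j).differentiable (by simp)).differentiableAt)
    (fun p => (smf hU hP hfs p).diff hx) l

lemma pd_Y {x : Fin n → ℝ} (hx : x ∈ U) (l i : Fin n) :
    pd l (fun y => Y y i) x
      = ∑ j : Fin k, (pd l (fun y => μ j (fun p => f p y)) x
            * ham P (f (Fin.castLE hk j)) x i
          + μ j (fun p => f p x)
            * pd l (fun y => ham P (f (Fin.castLE hk j)) y i) x) := by
  rw [show (fun y => Y y i) = fun y => ∑ j : Fin k, μ j (fun p => f p y)
      * ham P (f (Fin.castLE hk j)) y i from funext fun y => hY y i]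
  rw [pd_sum Finset.univ (fun j _ => ((smg hk hU hP hfs hμ Y hY j).mul
    (smX hU hP hfs (Fin.castLE hk j) i)).diff hx) l]
  exact Finset.sum_congr rfl fun j _ =>
    pd_mul ((smg hk hU hP hfs hμ Y hY j).diff hx)
      ((smX hU hP hfs (Fin.castLE hk j) i).diff hx) l

/-- `Y f_p = 0`. -/
lemma Y_pd_f (hinv : ∀ i j, ∀ x ∈ U, pbrak P (f i) (f j) x = 0)
    {x : Fin n → ℝ} (hx : x ∈ U) (p : Fin s) :
    ∑ l, Y x l * pd l (f p) x = 0 := by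
  have step : ∑ l, Y x l * pd l (f p) x
      = ∑ l, ∑ j : Fin k, μ j (fun p => f p x)
          * (ham P (f (Fin.castLE hk j)) x l * pd l (f p) x) := by
    refine Finset.sum_congr rfl fun l _ => ?_
    rw [hY x l, Finset.sum_mul]
    exact Finset.sum_congr rfl fun j _ => by ring
  rw [step, Finset.sum_comm]
  refine Finset.sum_eq_zero fun j _ => ?_
  rw [← Finset.mul_sum, ham_pd_f hU hP hfs hinv hx (Fin.castLE hk j) p, mul_zero]

/-- `Y` annihilates `F`-basic functions. -/
lemma Y_basic (hinv : ∀ i j, ∀ x ∈ U, pbrak P (f i) (f j) x = 0)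
    {h : (Fin s → ℝ) → ℝ} (hh : ContDiff ℝ (⊤ : ℕ∞) h)
    {x : Fin n → ℝ} (hx : x ∈ U) :
    ∑ l, Y x l * pd l (fun y => h (fun p => f p y)) x = 0 := by
  have step : ∑ l, Y x l * pd l (fun y => h (fun p => f p y)) x
      = ∑ l, ∑ p, pd p h (fun p => f p x) * (Y x l * pd l (f p) x) := by
    refine Finset.sum_congr rfl fun l _ => ?_
    rw [pd_comp ((hh.differentiable (by simp)).differentiableAt)
      (fun p => (smf hU hP hfs p).diff hx) l, Finset.mul_sum]
    exact Finset.sum_congr rfl fun p _ => by ring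
  rw [step, Finset.sum_comm]
  refine Finset.sum_eq_zero fun p _ => ?_
  rw [← Finset.mul_sum, Y_pd_f hk hU hP hfs hμ Y hY hinv hx p, mul_zero]

/-- `X_{f_m}` annihilates the coefficients `μ_j ∘ F`. -/
lemma ham_pd_g (hinv : ∀ i j, ∀ x ∈ U, pbrak P (f i) (f j) x = 0)
    {x : Fin n → ℝ} (hx : x ∈ U) (m : Fin s) (j : Fin k) :
    ∑ l, ham P (f m) x l * pd l (fun y => μ j (fun p => f p y)) x = 0 := by
  have step : ∑ l, ham P (f m) x l * pd l (fun y => μ j (fun p => f p y)) x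
      = ∑ l, ∑ p, pd p (μ j) (fun p => f p x) * (ham P (f m) x l * pd l (f p) x) := by
    refine Finset.sum_congr rfl fun l _ => ?_
    rw [pd_g hk hU hP hfs hμ Y hY hx j l, Finset.mul_sum]
    exact Finset.sum_congr rfl fun p _ => by ring
  rw [step, Finset.sum_comm]
  refine Finset.sum_eq_zero fun p _ => ?_
  rw [← Finset.mul_sum, ham_pd_f hU hP hfs hinv hx m p, mul_zero]

/-- `[Y, X_{f_m}] = 0` on `U`. -/
lemma Y_bracket (hinv : ∀ i j, ∀ x ∈ U, pbrak P (f i) (f j) x = 0)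
    {x : Fin n → ℝ} (hx : x ∈ U) (m : Fin s) (i : Fin n) :
    ∑ l, (Y x l * pd l (fun y => ham P (f m) y i) x
      - ham P (f m) x l * pd l (fun y => Y y i) x) = 0 := by
  have step : ∑ l, (Y x l * pd l (fun y => ham P (f m) y i) x
        - ham P (f m) x l * pd l (fun y => Y y i) x)
      = ∑ l, ∑ j : Fin k, (μ j (fun p => f p x)
          * (ham P (f (Fin.castLE hk j)) x l * pd l (fun y => ham P (f m) y i) x
            - ham P (f m) x l * pd l (fun y => ham P (f (Fin.castLE hk j)) y i) x)
        - (ham P (f m) x l * pd l (fun y => μ j (fun p => f p y)) x)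
          * ham P (f (Fin.castLE hk j)) x i) := by
    refine Finset.sum_congr rfl fun l _ => ?_
    rw [hY x l, pd_Y hk hU hP hfs hμ Y hY hx l i, Finset.sum_mul, Finset.mul_sum,
      ← Finset.sum_sub_distrib]
    exact Finset.sum_congr rfl fun j _ => by ring
  rw [step, Finset.sum_comm]
  refine Finset.sum_eq_zero fun j _ => ?_
  rw [Finset.sum_sub_distrib, ← Finset.mul_sum, ← Finset.sum_mul,
    ham_bracket hU hP hfs hinv hx (Fin.castLE hk j) m i,
    ham_pd_g hk hU hP hfs hμ Y hY hinv hx m j, mul_zero, zero_mul, sub_zero]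

end Main

end LSqAux

namespace LSqAux

lemma pd_sub {n : ℕ} {a b : (Fin n → ℝ) → ℝ} {x : Fin n → ℝ}
    (ha : DifferentiableAt ℝ a x) (hb : DifferentiableAt ℝ b x) (i : Fin n) :
    pd i (fun y => a y - b y) x = pd i a x - pd i b x := by
  unfold pd
  rw [fderiv_fun_sub ha hb]
  simp

section Main2

variable {n s k : ℕ} (hk : k ≤ s) {U : Set (Fin n → ℝ)} (hU : IsOpen U)
  {P : (Fin n → ℝ) → Matrix (Fin n) (Fin n) ℝ} (hP : IsPoissonMatrix P U)
  {f : Fin s → (Fin n → ℝ) → ℝ} (hfs : ∀ i, ContDiffOn ℝ (⊤ : ℕ∞) (f i) U)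
  {μ : Fin k → (Fin s → ℝ) → ℝ} (hμ : ∀ j, ContDiff ℝ (⊤ : ℕ∞) (μ j))
  (Y : (Fin n → ℝ) → Fin n → ℝ)
  (hY : ∀ y i, Y y i = ∑ j : Fin k, μ j (fun p => f p y)
      * ham P (f (Fin.castLE hk j)) y i)

include hU hP hfs hμ hY

lemma sumPlk {x : Fin n → ℝ} (hx : x ∈ U) (m : Fin s) (kk : Fin n) :
    ∑ l, P x l kk * pd l (f m) x = -ham P (f m) x kk := by
  have h1 : ham P (f m) x kk = ∑ l, P x kk l * pd l (f m) x := rfl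
  rw [h1, ← Finset.sum_neg_distrib]
  refine Finset.sum_congr rfl fun l _ => ?_
  rw [hP.2.1 x hx l kk]; ring

/-- Equation for `L_Y π` on `U`: it is spanned by wedges of Hamiltonian vector fields. -/
lemma lieYP_eq {x : Fin n → ℝ} (hx : x ∈ U) (i kk : Fin n) :
    lieDer Y P x i kk = ∑ j : Fin k, ∑ m,
      pd m (μ j) (fun p => f p x)
        * (ham P (f m) x kk * ham P (f (Fin.castLE hk j)) x i
          - ham P (f m) x i * ham P (f (Fin.castLE hk j)) x kk) := by
  have stepA : lieDer Y P x i kk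
      = ∑ l, ∑ j : Fin k, (μ j (fun p => f p x)
          * (ham P (f (Fin.castLE hk j)) x l * pd l (fun y => P y i kk) x
            - P x l kk * pd l (fun y => ham P (f (Fin.castLE hk j)) y i) x
            - P x i l * pd l (fun y => ham P (f (Fin.castLE hk j)) y kk) x)
        - pd l (fun y => μ j (fun p => f p y)) x
          * (P x l kk * ham P (f (Fin.castLE hk j)) x i
            + P x i l * ham P (f (Fin.castLE hk j)) x kk)) := by
    show (∑ l, (Y x l * pd l (fun y => P y i kk) x
        - P x l kk * pd l (fun y => Y y i) x
        - P x i l * pd l (fun y => Y y kk) x)) = _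
    refine Finset.sum_congr rfl fun l _ => ?_
    rw [hY x l, pd_Y hk hU hP hfs hμ Y hY hx l i, pd_Y hk hU hP hfs hμ Y hY hx l kk,
      Finset.sum_mul, Finset.mul_sum, Finset.mul_sum, ← Finset.sum_sub_distrib,
      ← Finset.sum_sub_distrib]
    exact Finset.sum_congr rfl fun j _ => by ring
  rw [stepA, Finset.sum_comm]
  refine Finset.sum_congr rfl fun j _ => ?_
  rw [Finset.sum_sub_distrib, ← Finset.mul_sum,
    lie_ham_P hU hP hfs hx (Fin.castLE hk j) i kk, mul_zero, zero_sub,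
    ← Finset.sum_neg_distrib]
  have stepC : ∑ l, -(pd l (fun y => μ j (fun p => f p y)) x
        * (P x l kk * ham P (f (Fin.castLE hk j)) x i
          + P x i l * ham P (f (Fin.castLE hk j)) x kk))
      = ∑ l, ∑ m, -(pd m (μ j) (fun p => f p x) * pd l (f m) x
          * (P x l kk * ham P (f (Fin.castLE hk j)) x i
            + P x i l * ham P (f (Fin.castLE hk j)) x kk)) := by
    refine Finset.sum_congr rfl fun l _ => ?_
    rw [pd_g hk hU hP hfs hμ Y hY hx j l, Finset.sum_mul, ← Finset.sum_neg_distrib]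
  rw [stepC, Finset.sum_comm]
  refine Finset.sum_congr rfl fun m _ => ?_
  have hflat : ∑ l, -(pd m (μ j) (fun p => f p x) * pd l (f m) x
        * (P x l kk * ham P (f (Fin.castLE hk j)) x i
          + P x i l * ham P (f (Fin.castLE hk j)) x kk))
      = -((pd m (μ j) (fun p => f p x) * ham P (f (Fin.castLE hk j)) x i)
          * ∑ l, P x l kk * pd l (f m) x)
        - (pd m (μ j) (fun p => f p x) * ham P (f (Fin.castLE hk j)) x kk)
          * ∑ l, P x i l * pd l (f m) x := by
    rw [Finset.mul_sum, Finset.mul_sum, ← Finset.sum_neg_distrib, ← Finset.sum_sub_distrib]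
    exact Finset.sum_congr rfl fun l _ => by ring
  rw [hflat, sumPlk hk hU hP hfs hμ Y hY hx m kk,
    show (∑ l, P x i l * pd l (f m) x) = ham P (f m) x i from rfl]
  ring

/-- Derivative expansion of the explicit form of `L_Y π`. -/
lemma pd_R {x : Fin n → ℝ} (hx : x ∈ U) (l i kk : Fin n) :
    pd l (fun y => ∑ j : Fin k, ∑ m,
        pd m (μ j) (fun p => f p y)
          * (ham P (f m) y kk * ham P (f (Fin.castLE hk j)) y i
            - ham P (f m) y i * ham P (f (Fin.castLE hk j)) y kk)) x
      = ∑ j : Fin k, ∑ m,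
        (pd l (fun y => pd m (μ j) (fun p => f p y)) x
            * (ham P (f m) x kk * ham P (f (Fin.castLE hk j)) x i
              - ham P (f m) x i * ham P (f (Fin.castLE hk j)) x kk)
          + pd m (μ j) (fun p => f p x)
            * (pd l (fun y => ham P (f m) y kk) x * ham P (f (Fin.castLE hk j)) x i
              + ham P (f m) x kk * pd l (fun y => ham P (f (Fin.castLE hk j)) y i) x
              - pd l (fun y => ham P (f m) y i) x * ham P (f (Fin.castLE hk j)) x kk
              - ham P (f m) x i * pd l (fun y => ham P (f (Fin.castLE hk j)) y kk) x)) := by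
  have sin : ∀ (j : Fin k) (m : Fin s), SOn U (fun y =>
      ham P (f m) y kk * ham P (f (Fin.castLE hk j)) y i
        - ham P (f m) y i * ham P (f (Fin.castLE hk j)) y kk) :=
    fun j m => SOn.sub ((smX hU hP hfs m kk).mul (smX hU hP hfs (Fin.castLE hk j) i))
      ((smX hU hP hfs m i).mul (smX hU hP hfs (Fin.castLE hk j) kk))
  have sterm : ∀ (j : Fin k) (m : Fin s), SOn U (fun y =>
      pd m (μ j) (fun p => f p y)
        * (ham P (f m) y kk * ham P (f (Fin.castLE hk j)) y i
          - ham P (f m) y i * ham P (f (Fin.castLE hk j)) y kk)) :=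
    fun j m => (smc hk hU hP hfs hμ Y hY j m).mul (sin j m)
  rw [pd_sum Finset.univ (fun j _ =>
    (SOn.sum Finset.univ (fun m _ => sterm j m)).diff hx) l]
  refine Finset.sum_congr rfl fun j _ => ?_
  rw [pd_sum Finset.univ (fun m _ => (sterm j m).diff hx) l]
  refine Finset.sum_congr rfl fun m _ => ?_
  rw [pd_mul ((smc hk hU hP hfs hμ Y hY j m).diff hx) ((sin j m).diff hx) l,
    pd_sub (((smX hU hP hfs m kk).mul (smX hU hP hfs (Fin.castLE hk j) i)).diff hx)
      (((smX hU hP hfs m i).mul (smX hU hP hfs (Fin.castLE hk j) kk)).diff hx) l,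
    pd_mul ((smX hU hP hfs m kk).diff hx) ((smX hU hP hfs (Fin.castLE hk j) i).diff hx) l,
    pd_mul ((smX hU hP hfs m i).diff hx) ((smX hU hP hfs (Fin.castLE hk j) kk).diff hx) l]
  ring

/-- The main computation: `L_Y (L_Y π) = 0` on `U`. -/
lemma lie_sq (hinv : ∀ i j, ∀ x ∈ U, pbrak P (f i) (f j) x = 0)
    {x : Fin n → ℝ} (hx : x ∈ U) :
    lieDer Y (lieDer Y P) x = 0 := by
  refine Matrix.ext fun i kk => ?_
  rw [Matrix.zero_apply]
  show (∑ l, (Y x l * pd l (fun y => lieDer Y P y i kk) x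
      - lieDer Y P x l kk * pd l (fun y => Y y i) x
      - lieDer Y P x i l * pd l (fun y => Y y kk) x)) = 0
  have stepA : (∑ l, (Y x l * pd l (fun y => lieDer Y P y i kk) x
      - lieDer Y P x l kk * pd l (fun y => Y y i) x
      - lieDer Y P x i l * pd l (fun y => Y y kk) x))
      = ∑ l, ∑ j : Fin k, ∑ m,
        ((ham P (f m) x kk * ham P (f (Fin.castLE hk j)) x i
            - ham P (f m) x i * ham P (f (Fin.castLE hk j)) x kk)
          * (Y x l * pd l (fun y => pd m (μ j) (fun p => f p y)) x)
        + (pd m (μ j) (fun p => f p x) * ham P (f (Fin.castLE hk j)) x i)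
          * (Y x l * pd l (fun y => ham P (f m) y kk) x
            - ham P (f m) x l * pd l (fun y => Y y kk) x)
        + (pd m (μ j) (fun p => f p x) * ham P (f m) x kk)
          * (Y x l * pd l (fun y => ham P (f (Fin.castLE hk j)) y i) x
            - ham P (f (Fin.castLE hk j)) x l * pd l (fun y => Y y i) x)
        + (-(pd m (μ j) (fun p => f p x) * ham P (f (Fin.castLE hk j)) x kk))
          * (Y x l * pd l (fun y => ham P (f m) y i) x
            - ham P (f m) x l * pd l (fun y => Y y i) x)
        + (-(pd m (μ j) (fun p => f p x) * ham P (f m) x i))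
          * (Y x l * pd l (fun y => ham P (f (Fin.castLE hk j)) y kk) x
            - ham P (f (Fin.castLE hk j)) x l * pd l (fun y => Y y kk) x)) := by
    refine Finset.sum_congr rfl fun l _ => ?_
    rw [pd_congr hU (fun y hy => lieYP_eq hk hU hP hfs hμ Y hY hy i kk) hx l,
      pd_R hk hU hP hfs hμ Y hY hx l i kk,
      lieYP_eq hk hU hP hfs hμ Y hY hx l kk,
      lieYP_eq hk hU hP hfs hμ Y hY hx i l]
    simp only [Finset.mul_sum, Finset.sum_mul, ← Finset.sum_sub_distrib]
    exact Finset.sum_congr rfl fun j _ => Finset.sum_congr rfl fun m _ => by ring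
  rw [stepA]
  refine Eq.trans (sum_rot _) ?_
  refine Finset.sum_eq_zero fun j _ => Finset.sum_eq_zero fun m _ => ?_
  simp only [Finset.sum_add_distrib, ← Finset.mul_sum]
  rw [Y_basic hk hU hP hfs hμ Y hY hinv (contDiff_pd (hμ j) m) hx,
    Y_bracket hk hU hP hfs hμ Y hY hinv hx m kk,
    Y_bracket hk hU hP hfs hμ Y hY hinv hx (Fin.castLE hk j) i,
    Y_bracket hk hU hP hfs hμ Y hY hinv hx m i,
    Y_bracket hk hU hP hfs hμ Y hY hinv hx (Fin.castLE hk j) kk]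
  ring

end Main2

end LSqAux


/-- Equation (3.4) in Step 2 of the proof of Proposition 3.6 of the paper: for
`Y = Σ_{j=1}^k (μ_j ∘ F) X_{f_j}` a combination of the Hamiltonian vector fields of the
involutive family `F = (f₁, …, f_s)` with `F`-basic coefficients, one has `L_Y (L_Y π) = 0`. -/
theorem lie_derivative_squared_vanishes {n s k : ℕ} (hk : k ≤ s)
    (U : Set (Fin n → ℝ)) (hU : IsOpen U)
    (P : (Fin n → ℝ) → Matrix (Fin n) (Fin n) ℝ) (hP : IsPoissonMatrix P U)
    (f : Fin s → (Fin n → ℝ) → ℝ) (hfs : ∀ i, ContDiffOn ℝ (⊤ : ℕ∞) (f i) U)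
    (hinv : ∀ i j, ∀ x ∈ U, pbrak P (f i) (f j) x = 0)
    (μ : Fin k → (Fin s → ℝ) → ℝ) (hμ : ∀ j, ContDiff ℝ (⊤ : ℕ∞) (μ j)) :
    let Y : (Fin n → ℝ) → (Fin n → ℝ) :=
      fun x => ∑ j : Fin k, μ j (fun i => f i x) • ham P (f (Fin.castLE hk j)) x
    ∀ x ∈ U, lieDer Y (lieDer Y P) x = 0 := by
  intro Y x hx
  have hY : ∀ y i, Y y i = ∑ j : Fin k, μ j (fun p => f p y)
      * ham P (f (Fin.castLE hk j)) y i := by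
    intro y i
    show (∑ j : Fin k, μ j (fun p => f p y) • ham P (f (Fin.castLE hk j)) y) i = _
    simp [Finset.sum_apply]
  exact LSqAux.lie_sq hk hU hP hfs hμ Y hY hinv hx
end

section
/- Let Y: ℝⁿ → ℝⁿ be a smooth vector field admitting a smooth global flow of period 1, i.e. a smooth map Φ: ℝ × ℝⁿ → ℝⁿ with Φ(0, x) = x and Φ(1, x) = x for all x, and ∂Φ/∂t (t, x) = Y(Φ(t, x)) for all t, x. Let P be a smooth field of antisymmetric n × n matrices on ℝⁿ (a bivector field) such that L_Y(L_Y P) = 0 identically. Then L_Y P = 0 identically. -/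
open Set

namespace PFLDV

variable {n : ℕ}

lemma contDiff_pd {f : (Fin n → ℝ) → ℝ} (hf : ContDiff ℝ (⊤ : ℕ∞) f) (l : Fin n) :
    ContDiff ℝ (⊤ : ℕ∞) (pd l f) :=
  (hf.fderiv_right (by simp)).clm_apply contDiff_const

lemma contDiff_proj {Y : (Fin n → ℝ) → (Fin n → ℝ)} (hY : ContDiff ℝ (⊤ : ℕ∞) Y) (i : Fin n) :
    ContDiff ℝ (⊤ : ℕ∞) (fun y => Y y i) :=
  ((ContinuousLinearMap.proj (R := ℝ) (φ := fun _ : Fin n => ℝ) i).contDiff).comp hY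

lemma contDiff_lieDer {Y : (Fin n → ℝ) → (Fin n → ℝ)} (hY : ContDiff ℝ (⊤ : ℕ∞) Y)
    {P : (Fin n → ℝ) → Matrix (Fin n) (Fin n) ℝ}
    (hPs : ∀ i j, ContDiff ℝ (⊤ : ℕ∞) (fun x => P x i j)) (i k : Fin n) :
    ContDiff ℝ (⊤ : ℕ∞) (fun x => lieDer Y P x i k) := by
  simp only [lieDer, Matrix.of_apply]
  apply ContDiff.sum
  intro l _
  exact (((contDiff_proj hY l).mul (contDiff_pd (hPs i k) l)).sub
      ((hPs l k).mul (contDiff_pd (contDiff_proj hY i) l))).sub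
    ((hPs i l).mul (contDiff_pd (contDiff_proj hY k) l))

lemma hasDerivAt_matmul {U V : ℝ → Matrix (Fin n) (Fin n) ℝ}
    {U' V' : Matrix (Fin n) (Fin n) ℝ} {t : ℝ}
    (hU : ∀ i j, HasDerivAt (fun s => U s i j) (U' i j) t)
    (hV : ∀ i j, HasDerivAt (fun s => V s i j) (V' i j) t) :
    ∀ i j, HasDerivAt (fun s => (U s * V s) i j) ((U' * V t + U t * V') i j) t := by
  intro i j
  simp only [Matrix.mul_apply, Matrix.add_apply, ← Finset.sum_add_distrib]
  exact HasDerivAt.fun_sum fun l _ => (hU i l).mul (hV l j)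

/-- Uniqueness-of-the-zero-solution for the linear matrix ODE `D' = A D + D Aᵀ`. -/

lemma fderiv_apply_eq_sum (f : (Fin n → ℝ) → ℝ) (x v : Fin n → ℝ) :
    fderiv ℝ f x v = ∑ l, v l * pd l f x := by
  have hv : v = ∑ l : Fin n, (v l) • (Pi.single l 1 : Fin n → ℝ) := by
    funext j
    simp [Finset.sum_apply, Pi.single_apply, eq_comm]
  conv_lhs => rw [hv]
  rw [map_sum]
  simp [pd]

lemma chain_flow {f : (Fin n → ℝ) → ℝ} (hf : ContDiff ℝ (⊤ : ℕ∞) f)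
    {φ : ℝ → (Fin n → ℝ)} {t : ℝ} {V : Fin n → ℝ} (hφ : HasDerivAt φ V t) :
    HasDerivAt (fun s => f (φ s)) (∑ l, V l * pd l f (φ t)) t := by
  have h := ((hf.differentiable (by simp)) (φ t)).hasFDerivAt.comp_hasDerivAt t hφ
  rwa [fderiv_apply_eq_sum] at h

/-- Uniqueness-of-the-zero-solution for the linear matrix ODE `D' = A D + D Aᵀ`. -/
lemma linear_ode_zero {A D : ℝ → Fin n → Fin n → ℝ}
    (hA : ∀ i l, Continuous fun t => A t i l)
    (hDc : ∀ i k, Continuous fun t => D t i k)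
    (hD : ∀ t ∈ Icc (0:ℝ) 1, ∀ i k, HasDerivAt (fun s => D s i k)
        (∑ l, (A t i l * D t l k + D t i l * A t k l)) t)
    (hD0 : ∀ i k, D 0 i k = 0) :
    ∀ t ∈ Icc (0:ℝ) 1, ∀ i k, D t i k = 0 := by
  have hg : Continuous fun t => ∑ i : Fin n, ∑ l : Fin n, |A t i l| := by
    apply continuous_finset_sum; intro i _
    exact continuous_finset_sum _ fun l _ => (hA i l).abs
  obtain ⟨Cb, hCb⟩ := (isCompact_Icc (a := (0:ℝ)) (b := 1)).exists_bound_of_continuousOn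
    hg.continuousOn
  have hgnn : ∀ t, 0 ≤ ∑ i : Fin n, ∑ l : Fin n, |A t i l| := fun t =>
    Finset.sum_nonneg fun i _ => Finset.sum_nonneg fun l _ => abs_nonneg _
  have hCb' : ∀ t ∈ Icc (0:ℝ) 1, ∀ i l, |A t i l| ≤ Cb := by
    intro t ht i l
    have h1 : |A t i l| ≤ ∑ l : Fin n, |A t i l| :=
      Finset.single_le_sum (f := fun l => |A t i l|) (fun l _ => abs_nonneg _) (Finset.mem_univ l)
    have h2 : (∑ l : Fin n, |A t i l|) ≤ ∑ i : Fin n, ∑ l : Fin n, |A t i l| :=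
      Finset.single_le_sum (f := fun i => ∑ l : Fin n, |A t i l|)
        (fun i _ => Finset.sum_nonneg fun l _ => abs_nonneg _) (Finset.mem_univ i)
    calc |A t i l| ≤ ∑ i : Fin n, ∑ l : Fin n, |A t i l| := h1.trans h2
      _ ≤ Cb := (le_abs_self _).trans (by simpa [Real.norm_eq_abs] using hCb t ht)
  have hCbnn : 0 ≤ Cb := (hgnn 0).trans (by
    simpa [Real.norm_eq_abs, abs_of_nonneg (hgnn 0)] using hCb 0 (by constructor <;> norm_num))
  set K : ℝ := 2 * n * Cb with hK
  -- view D as a Pi-valued function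
  set f' : ℝ → (Fin n → Fin n → ℝ) :=
    fun t i k => ∑ l, (A t i l * D t l k + D t i l * A t k l) with hf'def
  have hnormD : ∀ t l k, |D t l k| ≤ ‖D t‖ := by
    intro t l k
    calc |D t l k| = ‖D t l k‖ := rfl
      _ ≤ ‖D t l‖ := norm_le_pi_norm (D t l) k
      _ ≤ ‖D t‖ := norm_le_pi_norm (D t) l
  have key := norm_le_gronwallBound_of_norm_deriv_right_le (f := D) (f' := f')
    (δ := 0) (K := K) (ε := 0) (a := 0) (b := 1)
    (continuous_pi fun i => continuous_pi fun k => hDc i k).continuousOn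
    (fun t ht => by
      have : HasDerivAt D (f' t) t := by
        rw [hasDerivAt_pi]
        intro i
        rw [hasDerivAt_pi]
        intro k
        exact hD t (Ico_subset_Icc_self ht) i k
      exact this.hasDerivWithinAt)
    (by
      have : D 0 = 0 := by funext i k; exact hD0 i k
      simp [this])
    (fun t ht => by
      rw [add_zero]
      have hKnn : (0:ℝ) ≤ K * ‖D t‖ := by positivity
      rw [pi_norm_le_iff_of_nonneg hKnn]
      intro i
      rw [pi_norm_le_iff_of_nonneg hKnn]
      intro k
      have hick := Ico_subset_Icc_self ht
      calc ‖f' t i k‖ = |∑ l, (A t i l * D t l k + D t i l * A t k l)| := rfl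
        _ ≤ ∑ l, |A t i l * D t l k + D t i l * A t k l| := Finset.abs_sum_le_sum_abs _ _
        _ ≤ ∑ _l : Fin n, 2 * Cb * ‖D t‖ := by
            apply Finset.sum_le_sum
            intro l _
            calc |A t i l * D t l k + D t i l * A t k l|
                ≤ |A t i l * D t l k| + |D t i l * A t k l| := abs_add_le _ _
              _ = |A t i l| * |D t l k| + |D t i l| * |A t k l| := by rw [abs_mul, abs_mul]
              _ ≤ Cb * ‖D t‖ + ‖D t‖ * Cb := by
                  gcongr <;>
                    first
                      | exact abs_nonneg _
                      | exact hCb' t hick i l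
                      | exact hCb' t hick k l
                      | exact hnormD t l k
                      | exact hnormD t i l
              _ = 2 * Cb * ‖D t‖ := by ring
        _ = K * ‖D t‖ := by
            rw [Finset.sum_const, Finset.card_univ, Fintype.card_fin]
            simp [hK]; ring)
  intro t ht i k
  have := key t ht
  rw [gronwallBound_ε0_δ0] at this
  have h0 : ‖D t‖ ≤ 0 := this
  have : D t = 0 := norm_le_zero_iff.mp h0
  exact congrFun (congrFun this i) k



end PFLDV

section
open Matrix

/-- The Claim in Step 2 of the proof of Proposition 3.6 of the paper: if `Y` is a smooth
vector field with a smooth global flow of period `1` and `P` is a smooth bivector field with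
`L_Y (L_Y P) = 0`, then `L_Y P = 0`. -/
theorem periodic_flow_lie_derivative_vanishes {n : ℕ}
    (Y : (Fin n → ℝ) → (Fin n → ℝ)) (hY : ContDiff ℝ (⊤ : ℕ∞) Y)
    (Φ : ℝ × (Fin n → ℝ) → (Fin n → ℝ)) (hΦ : ContDiff ℝ (⊤ : ℕ∞) Φ)
    (hΦ0 : ∀ x, Φ (0, x) = x) (hΦ1 : ∀ x, Φ (1, x) = x)
    (hflow : ∀ (t : ℝ) (x : Fin n → ℝ),
      HasDerivAt (fun s => Φ (s, x)) (Y (Φ (t, x))) t)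
    (P : (Fin n → ℝ) → Matrix (Fin n) (Fin n) ℝ)
    (hPs : ∀ i j, ContDiff ℝ (⊤ : ℕ∞) (fun x => P x i j))
    (hPanti : ∀ x i j, P x i j = -P x j i)
    (hLL : ∀ x, lieDer Y (lieDer Y P) x = 0) :
    ∀ x, lieDer Y P x = 0 := by
  intro x
  classical
  have hYd : Differentiable ℝ Y := hY.differentiable (by simp)
  have hΦd : Differentiable ℝ Φ := hΦ.differentiable (by simp)
  set φ : ℝ → (Fin n → ℝ) := fun t => Φ (t, x) with hφdef
  have hφt : ∀ t, HasDerivAt φ (Y (φ t)) t := fun t => hflow t x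
  have hφc : Continuous φ := hΦ.continuous.comp (continuous_id.prodMk continuous_const)
  set A : ℝ → Matrix (Fin n) (Fin n) ℝ :=
    fun t => Matrix.of fun i l => pd l (fun y => Y y i) (φ t) with hAdef
  set S : ℝ → Matrix (Fin n) (Fin n) ℝ := fun t => P (φ t) with hSdef
  set R : ℝ → Matrix (Fin n) (Fin n) ℝ := fun t => lieDer Y P (φ t) with hRdef
  set M : ℝ → Matrix (Fin n) (Fin n) ℝ :=
    fun t => Matrix.of fun i j => fderiv ℝ Φ (t, x) (0, Pi.single j 1) i with hMdef
  have hAc : ∀ i l, Continuous fun t => A t i l := fun i l =>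
    ((PFLDV.contDiff_pd (PFLDV.contDiff_proj hY i) l).continuous).comp hφc
  have hSc : ∀ i k, Continuous fun t => S t i k := fun i k => ((hPs i k).continuous).comp hφc
  have hQs : ∀ i k, ContDiff ℝ (⊤ : ℕ∞) fun y => lieDer Y P y i k := PFLDV.contDiff_lieDer hY hPs
  have hRc : ∀ i k, Continuous fun t => R t i k := fun i k => ((hQs i k).continuous).comp hφc
  -- entrywise formula for the Jacobian of `Y` applied to a vector
  have hYvec : ∀ (y v : Fin n → ℝ) (i : Fin n),
      fderiv ℝ Y y v i = ∑ l, v l * pd l (fun z => Y z i) y := by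
    intro y v i
    have hc : HasFDerivAt (fun z => Y z i)
        ((ContinuousLinearMap.proj (R := ℝ) (φ := fun _ : Fin n => ℝ) i).comp (fderiv ℝ Y y)) y :=
      (ContinuousLinearMap.proj (R := ℝ) (φ := fun _ : Fin n => ℝ) i).hasFDerivAt.comp y
        (hYd y).hasFDerivAt
    have h := PFLDV.fderiv_apply_eq_sum (fun z => Y z i) y v
    rw [hc.fderiv] at h
    simpa using h
  -- M is the identity whenever the time-c map is the identity
  have hMid : ∀ c : ℝ, (∀ y, Φ (c, y) = y) → M c = 1 := by
    intro c hc
    have hin : HasFDerivAt (fun y : Fin n → ℝ => ((c, y) : ℝ × (Fin n → ℝ)))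
        ((0 : (Fin n → ℝ) →L[ℝ] ℝ).prod (ContinuousLinearMap.id ℝ (Fin n → ℝ))) x :=
      HasFDerivAt.prodMk (hasFDerivAt_const c x) (hasFDerivAt_id x)
    have hcomp : HasFDerivAt (fun y => Φ (c, y))
        ((fderiv ℝ Φ (c, x)).comp
          ((0 : (Fin n → ℝ) →L[ℝ] ℝ).prod (ContinuousLinearMap.id ℝ (Fin n → ℝ)))) x :=
      (hΦd (c, x)).hasFDerivAt.comp x hin
    have heq : (fun y => Φ (c, y)) = id := funext hc
    rw [heq] at hcomp
    have huniq := hcomp.unique (hasFDerivAt_id x)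
    ext i j
    have happ : ((fderiv ℝ Φ (c, x)).comp
        ((0 : (Fin n → ℝ) →L[ℝ] ℝ).prod (ContinuousLinearMap.id ℝ (Fin n → ℝ))))
          (Pi.single j 1) = ContinuousLinearMap.id ℝ (Fin n → ℝ) (Pi.single j 1) := by
      rw [huniq]
    simp only [ContinuousLinearMap.comp_apply, ContinuousLinearMap.prod_apply,
      ContinuousLinearMap.zero_apply, ContinuousLinearMap.id_apply] at happ
    have : M c i j = (Pi.single j 1 : Fin n → ℝ) i := by
      simp only [hMdef, Matrix.of_apply]
      rw [happ]
    rw [this, Matrix.one_apply, Pi.single_apply]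
  have hM0 : M 0 = 1 := hMid 0 hΦ0
  have hM1 : M 1 = 1 := hMid 1 hΦ1
  -- the variational (linearized) ODE for M
  have hΦd2 : Differentiable ℝ (fderiv ℝ Φ) := (hΦ.fderiv_right (m := (⊤ : ℕ∞)) (by simp)).differentiable (by simp)
  have hMd : ∀ t i j, HasDerivAt (fun s => M s i j) ((A t * M t) i j) t := by
    intro t i j
    have hf'' : HasFDerivAt (fderiv ℝ Φ) (fderiv ℝ (fderiv ℝ Φ) (t, x)) (t, x) :=
      (hΦd2 (t, x)).hasFDerivAt
    have hγ : HasDerivAt (fun s : ℝ => ((s, x) : ℝ × (Fin n → ℝ))) (1, 0) t :=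
      HasDerivAt.prodMk (hasDerivAt_id t) (hasDerivAt_const t x)
    have hMc : HasDerivAt (fun s => fderiv ℝ Φ (s, x)) (fderiv ℝ (fderiv ℝ Φ) (t, x) (1, 0)) t :=
      hf''.comp_hasDerivAt t hγ
    have h5 : HasDerivAt (fun s => fderiv ℝ Φ (s, x) ((0, Pi.single j 1) : ℝ × (Fin n → ℝ)))
        (fderiv ℝ (fderiv ℝ Φ) (t, x) (1, 0) (0, Pi.single j 1)) t := by
      have := hMc.clm_apply (hasDerivAt_const t ((0, Pi.single j 1) : ℝ × (Fin n → ℝ)))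
      simpa using this
    have h6 : HasDerivAt (fun s => M s i j)
        (fderiv ℝ (fderiv ℝ Φ) (t, x) (1, 0) (0, Pi.single j 1) i) t := by
      have := ((ContinuousLinearMap.proj (R := ℝ) (φ := fun _ : Fin n => ℝ)
        i).hasFDerivAt).comp_hasDerivAt t h5
      exact this
    have hsym := second_derivative_symmetric (f := Φ) (f' := fderiv ℝ Φ)
      (fun y => (hΦd y).hasFDerivAt) hf'' ((1 : ℝ), (0 : Fin n → ℝ)) (0, Pi.single j 1)
    have hfl : ∀ p : ℝ × (Fin n → ℝ), fderiv ℝ Φ p (1, 0) = Y (Φ p) := by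
      rintro ⟨s, y⟩
      have hγ' : HasDerivAt (fun s' : ℝ => ((s', y) : ℝ × (Fin n → ℝ))) (1, 0) s :=
        HasDerivAt.prodMk (hasDerivAt_id s) (hasDerivAt_const s y)
      exact ((hΦd (s, y)).hasFDerivAt.comp_hasDerivAt s hγ').unique (hflow s y)
    have h7a : HasFDerivAt (fun p : ℝ × (Fin n → ℝ) => Y (Φ p))
        ((ContinuousLinearMap.apply ℝ (Fin n → ℝ) ((1 : ℝ), (0 : Fin n → ℝ))).comp
          (fderiv ℝ (fderiv ℝ Φ) (t, x))) (t, x) := by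
      have h := (ContinuousLinearMap.apply ℝ (Fin n → ℝ)
        ((1 : ℝ), (0 : Fin n → ℝ))).hasFDerivAt.comp (t, x) hf''
      have heq : (fun p : ℝ × (Fin n → ℝ) =>
          ContinuousLinearMap.apply ℝ (Fin n → ℝ) ((1 : ℝ), (0 : Fin n → ℝ)) (fderiv ℝ Φ p))
          = fun p => Y (Φ p) := by
        funext p; simpa using hfl p
      have h2 : HasFDerivAt (fun p : ℝ × (Fin n → ℝ) =>
          ContinuousLinearMap.apply ℝ (Fin n → ℝ) ((1 : ℝ), (0 : Fin n → ℝ)) (fderiv ℝ Φ p))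
          ((ContinuousLinearMap.apply ℝ (Fin n → ℝ) ((1 : ℝ), (0 : Fin n → ℝ))).comp
            (fderiv ℝ (fderiv ℝ Φ) (t, x))) (t, x) := h
      rwa [heq] at h2
    have h7b : HasFDerivAt (fun p : ℝ × (Fin n → ℝ) => Y (Φ p))
        ((fderiv ℝ Y (Φ (t, x))).comp (fderiv ℝ Φ (t, x))) (t, x) :=
      (hYd (Φ (t, x))).hasFDerivAt.comp (t, x) (hΦd (t, x)).hasFDerivAt
    have h7 := h7a.unique h7b
    have happ : fderiv ℝ (fderiv ℝ Φ) (t, x) ((0, Pi.single j 1) : ℝ × (Fin n → ℝ)) (1, 0)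
        = fderiv ℝ Y (Φ (t, x)) (fderiv ℝ Φ (t, x) (0, Pi.single j 1)) := by
      have := congrArg (fun L => L ((0, Pi.single j 1) : ℝ × (Fin n → ℝ))) h7
      simpa using this
    have hval : fderiv ℝ (fderiv ℝ Φ) (t, x) (1, 0) (0, Pi.single j 1) i = (A t * M t) i j := by
      rw [hsym, happ, hYvec]
      rw [Matrix.mul_apply]
      apply Finset.sum_congr rfl
      intro l _
      simp only [hMdef, hAdef, Matrix.of_apply, hφdef]
      ring
    rwa [hval] at h6

  -- derivative of the entries of S
  have hSd : ∀ t i k, HasDerivAt (fun s => S s i k)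
      ((A t * S t + S t * (A t)ᵀ + R t) i k) t := by
    intro t i k
    have h := PFLDV.chain_flow (hPs i k) (hφt t)
    have hsplit : (∑ l, Y (φ t) l * pd l (fun y => P y i k) (φ t))
        = (∑ l, (Y (φ t) l * pd l (fun y => P y i k) (φ t)
            - P (φ t) l k * pd l (fun y => Y y i) (φ t)
            - P (φ t) i l * pd l (fun y => Y y k) (φ t)))
          + ∑ l, (P (φ t) l k * pd l (fun y => Y y i) (φ t)
            + P (φ t) i l * pd l (fun y => Y y k) (φ t)) := by
      rw [← Finset.sum_add_distrib]
      apply Finset.sum_congr rfl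
      intro l _
      ring
    have hval : (∑ l, Y (φ t) l * pd l (fun y => P y i k) (φ t))
        = (A t * S t + S t * (A t)ᵀ + R t) i k := by
      rw [hsplit]
      simp only [Matrix.add_apply, Matrix.mul_apply, Matrix.transpose_apply, hRdef, hSdef, hAdef,
        lieDer, Matrix.of_apply]
      rw [Finset.sum_add_distrib,
        show (∑ l, P (φ t) l k * pd l (fun y => Y y i) (φ t))
          = ∑ l, pd l (fun y => Y y i) (φ t) * P (φ t) l k from
          Finset.sum_congr rfl fun l _ => mul_comm _ _]
      ring
    rw [← hval]
    exact h
  -- derivative of the entries of R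
  have hRd : ∀ t i k, HasDerivAt (fun s => R s i k)
      ((A t * R t + R t * (A t)ᵀ) i k) t := by
    intro t i k
    have h := PFLDV.chain_flow (hQs i k) (hφt t)
    have h0 : lieDer Y (lieDer Y P) (φ t) i k = 0 := by
      rw [hLL (φ t)]; rfl
    have h0' : ∑ l, (Y (φ t) l * pd l (fun y => lieDer Y P y i k) (φ t)
        - lieDer Y P (φ t) l k * pd l (fun y => Y y i) (φ t)
        - lieDer Y P (φ t) i l * pd l (fun y => Y y k) (φ t)) = 0 := by
      rw [lieDer] at h0
      simpa only [Matrix.of_apply] using h0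
    have hsplit : (∑ l, Y (φ t) l * pd l (fun y => lieDer Y P y i k) (φ t))
        = (∑ l, (Y (φ t) l * pd l (fun y => lieDer Y P y i k) (φ t)
            - lieDer Y P (φ t) l k * pd l (fun y => Y y i) (φ t)
            - lieDer Y P (φ t) i l * pd l (fun y => Y y k) (φ t)))
          + ∑ l, (lieDer Y P (φ t) l k * pd l (fun y => Y y i) (φ t)
            + lieDer Y P (φ t) i l * pd l (fun y => Y y k) (φ t)) := by
      rw [← Finset.sum_add_distrib]
      apply Finset.sum_congr rfl
      intro l _
      ring
    have hval : (∑ l, Y (φ t) l * pd l (fun y => lieDer Y P y i k) (φ t))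
        = (A t * R t + R t * (A t)ᵀ) i k := by
      rw [hsplit, h0', zero_add]
      simp only [Matrix.add_apply, Matrix.mul_apply, Matrix.transpose_apply, hRdef, hAdef,
        Matrix.of_apply]
      rw [Finset.sum_add_distrib,
        show (∑ l, lieDer Y P (φ t) l k * pd l (fun y => Y y i) (φ t))
          = ∑ l, pd l (fun y => Y y i) (φ t) * lieDer Y P (φ t) l k from
          Finset.sum_congr rfl fun l _ => mul_comm _ _]
    rw [← hval]
    exact h
  -- the constant matrix C := R 0 and the quadratic comparison fields
  set Cm : Matrix (Fin n) (Fin n) ℝ := R 0 with hCmdef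
  set G : ℝ → Matrix (Fin n) (Fin n) ℝ := fun t => M t * Cm * (M t)ᵀ with hGdef
  have hMtd : ∀ t i j, HasDerivAt (fun s => (M s)ᵀ i j) (((A t * M t)ᵀ) i j) t := by
    intro t i j
    simpa [Matrix.transpose_apply] using hMd t j i
  have hGd : ∀ t i k, HasDerivAt (fun s => G s i k) ((A t * G t + G t * (A t)ᵀ) i k) t := by
    intro t i k
    have hU : ∀ i j, HasDerivAt (fun s => (M s * Cm) i j) ((A t * M t * Cm) i j) t := by
      intro i j
      have := PFLDV.hasDerivAt_matmul (U' := A t * M t) (V' := 0) (hMd t)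
        (fun p q => by simpa using hasDerivAt_const t (Cm p q)) i j
      simpa [Matrix.mul_zero] using this
    have hG := PFLDV.hasDerivAt_matmul (U' := A t * M t * Cm) (V' := (A t * M t)ᵀ)
      hU (hMtd t) i k
    have hval : A t * M t * Cm * (M t)ᵀ + M t * Cm * (A t * M t)ᵀ
        = A t * G t + G t * (A t)ᵀ := by
      rw [Matrix.transpose_mul]
      simp only [hGdef, Matrix.mul_assoc]
    rw [hval] at hG
    exact hG
  have hGc : ∀ i k, Continuous fun t => G t i k := fun i k =>
    continuous_iff_continuousAt.mpr fun t => (hGd t i k).continuousAt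
  -- first Gronwall application: R = M Cm Mᵀ on [0,1]
  have hRG : ∀ t ∈ Set.Icc (0:ℝ) 1, ∀ i k, R t i k = G t i k := by
    have h := PFLDV.linear_ode_zero (A := fun t i l => A t i l)
      (D := fun t i k => R t i k - G t i k)
      (fun i l => hAc i l)
      (fun i k => (hRc i k).sub (hGc i k))
      (fun t ht i k => by
        have hd := (hRd t i k).sub (hGd t i k)
        have hval : (A t * R t + R t * (A t)ᵀ) i k - (A t * G t + G t * (A t)ᵀ) i k
            = ∑ l, ((fun t i l => A t i l) t i l * (R t l k - G t l k)
              + (R t i l - G t i l) * (fun t i l => A t i l) t k l) := by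
          simp only [Matrix.add_apply, Matrix.mul_apply, Matrix.transpose_apply]
          rw [← Finset.sum_add_distrib, ← Finset.sum_add_distrib, ← Finset.sum_sub_distrib]
          apply Finset.sum_congr rfl
          intro l _
          ring
        rw [hval] at hd
        exact hd)
      (fun i k => by
        have hG0 : G 0 = Cm := by
          simp only [hGdef]
          rw [hM0, Matrix.transpose_one, Matrix.one_mul, Matrix.mul_one]
        show R 0 i k - G 0 i k = 0
        rw [hG0, hCmdef, sub_self])
    intro t ht i k
    have h' : R t i k - G t i k = 0 := h t ht i k
    linarith
  -- second Gronwall application: S = M (S 0 + t Cm) Mᵀ on [0,1]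
  set X : ℝ → Matrix (Fin n) (Fin n) ℝ := fun t => S 0 + t • Cm with hXdef
  have hXd : ∀ t p q, HasDerivAt (fun s => X s p q) (Cm p q) t := by
    intro t p q
    have hfun : (fun s : ℝ => X s p q) = fun s : ℝ => S 0 p q + s * Cm p q := by
      funext s
      simp [hXdef, Matrix.add_apply, Matrix.smul_apply, smul_eq_mul]
    rw [hfun]
    simpa using (hasDerivAt_id t).mul_const (Cm p q)
  set H : ℝ → Matrix (Fin n) (Fin n) ℝ := fun t => M t * X t * (M t)ᵀ with hHdef
  have hHd : ∀ t i k, HasDerivAt (fun s => H s i k)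
      ((A t * H t + H t * (A t)ᵀ + G t) i k) t := by
    intro t i k
    have hU : ∀ i j, HasDerivAt (fun s => (M s * X s) i j)
        ((A t * M t * X t + M t * Cm) i j) t :=
      PFLDV.hasDerivAt_matmul (U' := A t * M t) (V' := Cm) (hMd t) (hXd t)
    have hH := PFLDV.hasDerivAt_matmul (U' := A t * M t * X t + M t * Cm)
      (V' := (A t * M t)ᵀ) hU (hMtd t) i k
    have hval : (A t * M t * X t + M t * Cm) * (M t)ᵀ + M t * X t * (A t * M t)ᵀ
        = A t * H t + H t * (A t)ᵀ + G t := by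
      rw [Matrix.add_mul, Matrix.transpose_mul]
      simp only [hHdef, hGdef, Matrix.mul_assoc]
      abel
    rw [hval] at hH
    exact hH
  have hHc : ∀ i k, Continuous fun t => H t i k := fun i k =>
    continuous_iff_continuousAt.mpr fun t => (hHd t i k).continuousAt
  have hSH : ∀ t ∈ Set.Icc (0:ℝ) 1, ∀ i k, S t i k = H t i k := by
    have h := PFLDV.linear_ode_zero (A := fun t i l => A t i l)
      (D := fun t i k => S t i k - H t i k)
      (fun i l => hAc i l)
      (fun i k => (hSc i k).sub (hHc i k))
      (fun t ht i k => by
        have hd := (hSd t i k).sub (hHd t i k)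
        have hval : (A t * S t + S t * (A t)ᵀ + R t) i k
            - (A t * H t + H t * (A t)ᵀ + G t) i k
            = ∑ l, ((fun t i l => A t i l) t i l * (S t l k - H t l k)
              + (S t i l - H t i l) * (fun t i l => A t i l) t k l) := by
          have hrg := hRG t ht i k
          simp only [Matrix.add_apply, Matrix.mul_apply, Matrix.transpose_apply]
          rw [hrg, add_sub_add_right_eq_sub, ← Finset.sum_add_distrib,
            ← Finset.sum_add_distrib, ← Finset.sum_sub_distrib]
          apply Finset.sum_congr rfl
          intro l _
          ring
        rw [hval] at hd
        exact hd)
      (fun i k => by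
        have hH0 : H 0 = S 0 := by
          simp only [hHdef, hXdef]
          rw [hM0, Matrix.transpose_one, Matrix.one_mul, Matrix.mul_one]
          simp
        show S 0 i k - H 0 i k = 0
        rw [hH0, sub_self])
    intro t ht i k
    have h' : S t i k - H t i k = 0 := h t ht i k
    linarith
  -- conclude using periodicity
  have hφ1 : φ 1 = x := hΦ1 x
  have hφ0 : φ 0 = x := hΦ0 x
  have hS1 : S 1 = S 0 := by
    simp only [hSdef, hφ1, hφ0]
  have hH1 : H 1 = S 0 + Cm := by
    simp only [hHdef, hXdef]
    rw [hM1, Matrix.transpose_one, Matrix.one_mul, Matrix.mul_one, one_smul]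
  have hCm0 : ∀ i k, Cm i k = 0 := by
    intro i k
    have h1 := hSH 1 (by constructor <;> norm_num) i k
    rw [hH1] at h1
    have h2 : S 1 i k = S 0 i k := by rw [hS1]
    rw [h2, Matrix.add_apply] at h1
    linarith
  have hfinal : lieDer Y P x = Cm := by
    have hc : Cm = lieDer Y P (φ 0) := hCmdef
    rw [hc, hφ0]
  ext i k
  rw [hfinal, Matrix.zero_apply]
  exact hCm0 i k

end
end

section
/- Let U ⊆ ℝⁿ be open, let π be a Poisson matrix on U, and let f_1, …, f_s: U → ℝ be smooth functions such that {f_i, f_j} = 0 on U for all i ∈ {1,…,r} and all j ∈ {1,…,s} (where r ≤ s). Set F := (f_1, …, f_s): U → ℝ^s. Then for all smooth functions g, h: ℝ^s → ℝ and every i ∈ {1,…,r}, one has X_{f_i}[{g ∘ F, h ∘ F}] = {{g ∘ F, h ∘ F}, f_i} = 0 on U; that is, the Poisson bracket of any two F-basic functions is constant along the Hamiltonian vector fields X_{f_1}, …, X_{f_r}. -/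
/-! ### Auxiliary calculus lemmas for `pd` -/

section helpers
variable {n : ℕ} {U : Set (Fin n → ℝ)} {x : Fin n → ℝ}

lemma diffAt_of_contDiffOn {m : WithTop ℕ∞} {f : (Fin n → ℝ) → ℝ} (hU : IsOpen U)
    (hf : ContDiffOn ℝ m f U) (hm : 1 ≤ m) (hx : x ∈ U) : DifferentiableAt ℝ f x :=
  (hf.contDiffAt (hU.mem_nhds hx)).differentiableAt (zero_lt_one.trans_le hm).ne'

lemma contDiffOn_pd {f : (Fin n → ℝ) → ℝ} (hU : IsOpen U) (hf : ContDiffOn ℝ (⊤ : ℕ∞) f U) (i : Fin n) :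
    ContDiffOn ℝ (⊤ : ℕ∞) (fun x => pd i f x) U := by
  have h1 : ContDiffOn ℝ (⊤ : ℕ∞) (fderiv ℝ f) U := hf.fderiv_of_isOpen hU (by simp)
  exact h1.clm_apply contDiffOn_const

lemma diffAt_pd {f : (Fin n → ℝ) → ℝ} (hU : IsOpen U) (hf : ContDiffOn ℝ (⊤ : ℕ∞) f U) (i : Fin n)
    (hx : x ∈ U) : DifferentiableAt ℝ (fun x => pd i f x) x :=
  diffAt_of_contDiffOn hU (contDiffOn_pd hU hf i) (by exact_mod_cast le_top) hx

lemma pd_sum {ι : Type*} (s : Finset ι) (A : ι → (Fin n → ℝ) → ℝ)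
    (h : ∀ k ∈ s, DifferentiableAt ℝ (A k) x) (i : Fin n) :
    pd i (fun y => ∑ k ∈ s, A k y) x = ∑ k ∈ s, pd i (A k) x := by
  unfold pd
  rw [fderiv_fun_sum h]
  simp

lemma pd_mul {a b : (Fin n → ℝ) → ℝ} (ha : DifferentiableAt ℝ a x)
    (hb : DifferentiableAt ℝ b x) (i : Fin n) :
    pd i (fun y => a y * b y) x = pd i a x * b x + a x * pd i b x := by
  unfold pd
  rw [fderiv_fun_mul ha hb]
  simp
  ring

lemma pd_eq_zero_of_eqOn_zero {ψ : (Fin n → ℝ) → ℝ} (hU : IsOpen U) (hx : x ∈ U)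
    (hψ : ∀ y ∈ U, ψ y = 0) (i : Fin n) : pd i ψ x = 0 := by
  have h : ψ =ᶠ[nhds x] (fun _ => (0:ℝ)) := by
    filter_upwards [hU.mem_nhds hx] with y hy using hψ y hy
  unfold pd
  rw [h.fderiv_eq]
  simp

lemma pd_pd_symm {u : (Fin n → ℝ) → ℝ} (hU : IsOpen U) (hu : ContDiffOn ℝ (⊤ : ℕ∞) u U)
    (hx : x ∈ U) (a b : Fin n) :
    pd a (fun y => pd b u y) x = pd b (fun y => pd a u y) x := by
  have hcd : ContDiffAt ℝ 2 u x := (hu.contDiffAt (hU.mem_nhds hx)).of_le (WithTop.coe_le_coe.mpr (le_top : (2 : ℕ∞) ≤ ⊤))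
  have hsym := hcd.isSymmSndFDerivAt (by simp)
  have hdf : DifferentiableAt ℝ (fderiv ℝ u) x :=
    (((hu.fderiv_of_isOpen hU (by simp) :
        ContDiffOn ℝ (⊤ : ℕ∞) (fderiv ℝ u) U)).contDiffAt (hU.mem_nhds hx)).differentiableAt
      (by simp)
  have key1 : pd a (fun y => fderiv ℝ u y (Pi.single b 1)) x
      = fderiv ℝ (fderiv ℝ u) x (Pi.single a 1) (Pi.single b 1) := by
    unfold pd
    rw [fderiv_clm_apply hdf (differentiableAt_const _)]
    simp
  have key2 : pd b (fun y => fderiv ℝ u y (Pi.single a 1)) x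
      = fderiv ℝ (fderiv ℝ u) x (Pi.single b 1) (Pi.single a 1) := by
    unfold pd
    rw [fderiv_clm_apply hdf (differentiableAt_const _)]
    simp
  show pd a (fun y => fderiv ℝ u y (Pi.single b 1)) x
      = pd b (fun y => fderiv ℝ u y (Pi.single a 1)) x
  rw [key1, key2]
  exact hsym _ _

lemma pd_comp {s : ℕ} (g : (Fin s → ℝ) → ℝ) (f : Fin s → (Fin n → ℝ) → ℝ)
    (hg : DifferentiableAt ℝ g (fun j => f j x)) (hf : ∀ j, DifferentiableAt ℝ (f j) x)
    (a : Fin n) :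
    pd a (fun y => g (fun j => f j y)) x
      = ∑ k, pd k g (fun j => f j x) * pd a (f k) x := by
  have hF : DifferentiableAt ℝ (fun y (j : Fin s) => f j y) x := differentiableAt_pi.2 hf
  have hcomp : fderiv ℝ (fun y => g (fun j => f j y)) x
      = (fderiv ℝ g (fun j => f j x)).comp (fderiv ℝ (fun y (j : Fin s) => f j y) x) :=
    fderiv_comp x hg hF
  unfold pd
  rw [hcomp]
  simp only [ContinuousLinearMap.coe_comp', Function.comp_apply]
  rw [fderiv_pi hf]
  have hv : (ContinuousLinearMap.pi fun j => fderiv ℝ (f j) x) (Pi.single a 1)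
      = ∑ k, (fderiv ℝ (f k) x (Pi.single a 1)) • (Pi.single k 1 : Fin s → ℝ) := by
    ext j
    simp [Pi.single_apply]
  rw [hv, map_sum]
  refine Finset.sum_congr rfl fun k _ => ?_
  rw [map_smul]
  simp [mul_comm]

end helpers

/-! ### Combinatorial reindexing lemmas for four-fold sums -/

section alg
variable {n : ℕ}
local notation "I" => Fin n

lemma sum4_prod (t : I → I → I → I → ℝ) :
    (∑ c, ∑ d, ∑ a, ∑ b, t c d a b)
      = ∑ p : I × I × I × I, t p.1 p.2.1 p.2.2.1 p.2.2.2 := by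
  rw [Fintype.sum_prod_type]
  refine Finset.sum_congr rfl fun c _ => ?_
  rw [Fintype.sum_prod_type]
  refine Finset.sum_congr rfl fun d _ => ?_
  rw [Fintype.sum_prod_type]

lemma sum4_perm1 (t : I → I → I → I → ℝ) :
    (∑ c, ∑ d, ∑ a, ∑ b, t c d a b) = ∑ c, ∑ d, ∑ a, ∑ b, t a b d c := by
  rw [sum4_prod, sum4_prod (fun c d a b => t a b d c)]
  exact Fintype.sum_equiv
    (⟨fun p => (p.2.2.2, p.2.2.1, p.1, p.2.1), fun q => (q.2.2.1, q.2.2.2, q.2.1, q.1),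
      fun p => rfl, fun q => rfl⟩ : (I×I×I×I) ≃ (I×I×I×I))
    (fun p => t p.1 p.2.1 p.2.2.1 p.2.2.2)
    (fun q => t q.2.2.1 q.2.2.2 q.2.1 q.1) (fun p => rfl)

lemma sum4_perm2 (t : I → I → I → I → ℝ) :
    (∑ c, ∑ d, ∑ a, ∑ b, t c d a b) = ∑ c, ∑ d, ∑ a, ∑ b, t c a b d := by
  rw [sum4_prod, sum4_prod (fun c d a b => t c a b d)]
  exact Fintype.sum_equiv
    (⟨fun p => (p.1, p.2.2.2, p.2.1, p.2.2.1), fun q => (q.1, q.2.2.1, q.2.2.2, q.2.1),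
      fun p => rfl, fun q => rfl⟩ : (I×I×I×I) ≃ (I×I×I×I))
    (fun p => t p.1 p.2.1 p.2.2.1 p.2.2.2)
    (fun q => t q.1 q.2.2.1 q.2.2.2 q.2.1) (fun p => rfl)

lemma sum4_perm3 (t : I → I → I → I → ℝ) :
    (∑ c, ∑ d, ∑ a, ∑ b, t c d a b) = ∑ c, ∑ d, ∑ a, ∑ b, t c b d a := by
  rw [sum4_prod, sum4_prod (fun c d a b => t c b d a)]
  exact Fintype.sum_equiv
    (⟨fun p => (p.1, p.2.2.1, p.2.2.2, p.2.1), fun q => (q.1, q.2.2.2, q.2.1, q.2.2.1),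
      fun p => rfl, fun q => rfl⟩ : (I×I×I×I) ≃ (I×I×I×I))
    (fun p => t p.1 p.2.1 p.2.2.1 p.2.2.2)
    (fun q => t q.1 q.2.2.2 q.2.1 q.2.2.1) (fun p => rfl)

lemma sum4_rot (t : I → I → I → I → ℝ) :
    (∑ c, ∑ d, ∑ a, ∑ b, t c d a b) = ∑ d, ∑ a, ∑ b, ∑ c, t c d a b := by
  rw [sum4_prod, sum4_prod (fun d a b c => t c d a b)]
  exact Fintype.sum_equiv
    (⟨fun p => (p.2.1, p.2.2.1, p.2.2.2, p.1), fun q => (q.2.2.2, q.1, q.2.1, q.2.2.1),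
      fun p => rfl, fun q => rfl⟩ : (I×I×I×I) ≃ (I×I×I×I))
    (fun p => t p.1 p.2.1 p.2.2.1 p.2.2.2)
    (fun q => t q.2.2.2 q.1 q.2.1 q.2.2.1) (fun p => rfl)

lemma split3 (E1 E2 E3 : I → I → I → I → ℝ) :
    (∑ c, ∑ d, ∑ a, ∑ b, (E1 c d a b + E2 c d a b + E3 c d a b))
      = (∑ c, ∑ d, ∑ a, ∑ b, E1 c d a b) + (∑ c, ∑ d, ∑ a, ∑ b, E2 c d a b)
        + (∑ c, ∑ d, ∑ a, ∑ b, E3 c d a b) := by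
  simp [Finset.sum_add_distrib]

lemma pair_cancel (Q S : I → I → ℝ) (hQ : ∀ i j, Q i j = -Q j i)
    (hS : ∀ i j, S i j = S j i) (p q : I → ℝ) :
    (∑ c, ∑ d, ∑ a, ∑ b, Q c d * Q a b * S c a * p b * q d)
      + (∑ c, ∑ d, ∑ a, ∑ b, Q c d * Q a b * S c b * q a * p d) = 0 := by
  have h2 : (∑ c, ∑ d, ∑ a, ∑ b, Q c d * Q a b * S c b * q a * p d)
      = ∑ c, ∑ d, ∑ a, ∑ b, -(Q c d * Q a b * S c a * p b * q d) := by
    rw [sum4_perm1 (fun c d a b => Q c d * Q a b * S c b * q a * p d)]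
    refine Finset.sum_congr rfl fun c _ => Finset.sum_congr rfl fun d _ =>
      Finset.sum_congr rfl fun a _ => Finset.sum_congr rfl fun b _ => ?_
    show Q a b * Q d c * S a c * q d * p b = -(Q c d * Q a b * S c a * p b * q d)
    rw [hQ d c, hS a c]
    ring
  rw [h2]
  simp

/-- The purely algebraic core of the Jacobi identity for Poisson brackets. -/
lemma jacobi_alg (Q : I → I → ℝ) (D : I → I → I → ℝ)
    (hQ : ∀ i j, Q i j = -Q j i)
    (hJ : ∀ i j k, ∑ l, (Q l k * D l i j + Q l i * D l j k + Q l j * D l k i) = 0)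
    (u v w : I → ℝ) (Su Sv Sw : I → I → ℝ)
    (hSu : ∀ i j, Su i j = Su j i) (hSv : ∀ i j, Sv i j = Sv j i)
    (hSw : ∀ i j, Sw i j = Sw j i) :
    (∑ c, ∑ d, Q c d * (∑ a, ∑ b, (D c a b * u a * v b
        + Q a b * Su c a * v b + Q a b * u a * Sv c b)) * w d)
    + (∑ c, ∑ d, Q c d * (∑ a, ∑ b, (D c a b * v a * w b
        + Q a b * Sv c a * w b + Q a b * v a * Sw c b)) * u d)
    + (∑ c, ∑ d, Q c d * (∑ a, ∑ b, (D c a b * w a * u b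
        + Q a b * Sw c a * u b + Q a b * w a * Su c b)) * v d) = 0 := by
  have flat : ∀ (E : I → I → I → I → ℝ) (z : I → ℝ),
      (∑ c, ∑ d, Q c d * (∑ a, ∑ b, E c d a b) * z d)
        = ∑ c, ∑ d, ∑ a, ∑ b, Q c d * E c d a b * z d := by
    intro E z
    refine Finset.sum_congr rfl fun c _ => Finset.sum_congr rfl fun d _ => ?_
    rw [Finset.mul_sum, Finset.sum_mul]
    refine Finset.sum_congr rfl fun a _ => ?_
    rw [Finset.mul_sum, Finset.sum_mul]
  rw [flat, flat, flat]
  have h1 : (∑ c, ∑ d, ∑ a, ∑ b, Q c d * (D c a b * u a * v b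
        + Q a b * Su c a * v b + Q a b * u a * Sv c b) * w d)
      = (∑ c, ∑ d, ∑ a, ∑ b, Q c d * D c a b * u a * v b * w d)
        + (∑ c, ∑ d, ∑ a, ∑ b, Q c d * Q a b * Su c a * v b * w d)
        + (∑ c, ∑ d, ∑ a, ∑ b, Q c d * Q a b * Sv c b * u a * w d) := by
    rw [← split3]
    exact Finset.sum_congr rfl fun c _ => Finset.sum_congr rfl fun d _ =>
      Finset.sum_congr rfl fun a _ => Finset.sum_congr rfl fun b _ => by ring
  have h2 : (∑ c, ∑ d, ∑ a, ∑ b, Q c d * (D c a b * v a * w b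
        + Q a b * Sv c a * w b + Q a b * v a * Sw c b) * u d)
      = (∑ c, ∑ d, ∑ a, ∑ b, Q c d * D c a b * v a * w b * u d)
        + (∑ c, ∑ d, ∑ a, ∑ b, Q c d * Q a b * Sv c a * w b * u d)
        + (∑ c, ∑ d, ∑ a, ∑ b, Q c d * Q a b * Sw c b * v a * u d) := by
    rw [← split3]
    exact Finset.sum_congr rfl fun c _ => Finset.sum_congr rfl fun d _ =>
      Finset.sum_congr rfl fun a _ => Finset.sum_congr rfl fun b _ => by ring
  have h3 : (∑ c, ∑ d, ∑ a, ∑ b, Q c d * (D c a b * w a * u b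
        + Q a b * Sw c a * u b + Q a b * w a * Su c b) * v d)
      = (∑ c, ∑ d, ∑ a, ∑ b, Q c d * D c a b * w a * u b * v d)
        + (∑ c, ∑ d, ∑ a, ∑ b, Q c d * Q a b * Sw c a * u b * v d)
        + (∑ c, ∑ d, ∑ a, ∑ b, Q c d * Q a b * Su c b * w a * v d) := by
    rw [← split3]
    exact Finset.sum_congr rfl fun c _ => Finset.sum_congr rfl fun d _ =>
      Finset.sum_congr rfl fun a _ => Finset.sum_congr rfl fun b _ => by ring
  rw [h1, h2, h3]
  have hA := pair_cancel Q Su hQ hSu v w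
  have hB := pair_cancel Q Sv hQ hSv w u
  have hC := pair_cancel Q Sw hQ hSw u v
  have hD : (∑ c, ∑ d, ∑ a, ∑ b, Q c d * D c a b * u a * v b * w d)
      + (∑ c, ∑ d, ∑ a, ∑ b, Q c d * D c a b * v a * w b * u d)
      + (∑ c, ∑ d, ∑ a, ∑ b, Q c d * D c a b * w a * u b * v d) = 0 := by
    rw [sum4_perm2 (fun c d a b => Q c d * D c a b * v a * w b * u d),
      sum4_perm3 (fun c d a b => Q c d * D c a b * w a * u b * v d)]
    rw [← split3 (fun c d a b => Q c d * D c a b * u a * v b * w d)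
      (fun c d a b => Q c a * D c b d * v b * w d * u a)
      (fun c d a b => Q c b * D c d a * w d * u a * v b)]
    rw [sum4_rot (fun c d a b => Q c d * D c a b * u a * v b * w d
      + Q c a * D c b d * v b * w d * u a + Q c b * D c d a * w d * u a * v b)]
    refine Finset.sum_eq_zero fun d _ => Finset.sum_eq_zero fun a _ =>
      Finset.sum_eq_zero fun b _ => ?_
    have hfac : (∑ c, (Q c d * D c a b * u a * v b * w d
        + Q c a * D c b d * v b * w d * u a + Q c b * D c d a * w d * u a * v b))
        = (∑ l, (Q l d * D l a b + Q l a * D l b d + Q l b * D l d a))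
          * (u a * v b * w d) := by
      rw [Finset.sum_mul]
      exact Finset.sum_congr rfl fun c _ => by ring
    rw [hfac, hJ a b d, zero_mul]
  linarith [hA, hB, hC, hD]

end alg

/-! ### Poisson bracket lemmas -/

section pbrak
variable {n : ℕ} {U : Set (Fin n → ℝ)} {x : Fin n → ℝ}
variable {P : (Fin n → ℝ) → Matrix (Fin n) (Fin n) ℝ}

lemma pbrak_antisymm (hPa : ∀ i j, P x i j = -P x j i) (u v : (Fin n → ℝ) → ℝ) :
    pbrak P u v x = -pbrak P v u x := by
  unfold pbrak
  rw [Finset.sum_comm]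
  have : ∀ j ∈ Finset.univ, ∀ i ∈ Finset.univ,
      P x i j * pd i u x * pd j v x = -(P x j i * pd j v x * pd i u x) := by
    intro j _ i _
    rw [hPa i j]
    ring
  rw [Finset.sum_congr rfl fun j hj => Finset.sum_congr rfl (this j hj)]
  simp

lemma pbrak_left_zero {ψ : (Fin n → ℝ) → ℝ} (hU : IsOpen U) (hx : x ∈ U)
    (hψ : ∀ y ∈ U, ψ y = 0) (w : (Fin n → ℝ) → ℝ) : pbrak P ψ w x = 0 := by
  unfold pbrak
  refine Finset.sum_eq_zero fun a _ => Finset.sum_eq_zero fun b _ => ?_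
  rw [pd_eq_zero_of_eqOn_zero hU hx hψ a]
  ring

lemma pbrak_basic_right {s : ℕ} (w : (Fin n → ℝ) → ℝ) (g : (Fin s → ℝ) → ℝ)
    (f : Fin s → (Fin n → ℝ) → ℝ)
    (hg : DifferentiableAt ℝ g (fun j => f j x)) (hf : ∀ j, DifferentiableAt ℝ (f j) x) :
    pbrak P w (fun y => g (fun j => f j y)) x
      = ∑ k, pd k g (fun j => f j x) * pbrak P w (f k) x := by
  unfold pbrak
  have step1 : ∀ i ∈ Finset.univ, ∀ j ∈ (Finset.univ : Finset (Fin n)),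
      P x i j * pd i w x * pd j (fun y => g (fun j' => f j' y)) x
        = ∑ k, pd k g (fun j' => f j' x) * (P x i j * pd i w x * pd j (f k) x) := by
    intro i _ j _
    rw [pd_comp g f hg hf j, Finset.mul_sum]
    exact Finset.sum_congr rfl fun k _ => by ring
  rw [Finset.sum_congr rfl fun i hi => Finset.sum_congr rfl (step1 i hi)]
  have step2 : (∑ k, pd k g (fun j' => f j' x)
        * (∑ i, ∑ j, P x i j * pd i w x * pd j (f k) x))
      = ∑ i, ∑ j, ∑ k, pd k g (fun j' => f j' x)
        * (P x i j * pd i w x * pd j (f k) x) := by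
    have e1 : ∀ k : Fin s, pd k g (fun j' => f j' x)
          * (∑ i, ∑ j, P x i j * pd i w x * pd j (f k) x)
        = ∑ i, ∑ j, pd k g (fun j' => f j' x)
          * (P x i j * pd i w x * pd j (f k) x) := by
      intro k
      rw [Finset.mul_sum]
      exact Finset.sum_congr rfl fun i _ => by rw [Finset.mul_sum]
    rw [Finset.sum_congr rfl fun k _ => e1 k]
    rw [Finset.sum_comm]
    exact Finset.sum_congr rfl fun i _ => Finset.sum_comm
  rw [step2]

lemma pd_pbrak (hU : IsOpen U)
    (hPs : ∀ i j, ContDiffOn ℝ (⊤ : ℕ∞) (fun x => P x i j) U)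
    {u v : (Fin n → ℝ) → ℝ} (hu : ContDiffOn ℝ (⊤ : ℕ∞) u U) (hv : ContDiffOn ℝ (⊤ : ℕ∞) v U)
    (hx : x ∈ U) (c : Fin n) :
    pd c (fun y => pbrak P u v y) x
      = ∑ a, ∑ b, (pd c (fun y => P y a b) x * pd a u x * pd b v x
        + P x a b * pd c (fun y => pd a u y) x * pd b v x
        + P x a b * pd a u x * pd c (fun y => pd b v y) x) := by
  have hPd : ∀ a b, DifferentiableAt ℝ (fun y => P y a b) x := fun a b =>
    diffAt_of_contDiffOn hU (hPs a b) (by simp) hx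
  have hud : ∀ a, DifferentiableAt ℝ (fun y => pd a u y) x := fun a => diffAt_pd hU hu a hx
  have hvd : ∀ b, DifferentiableAt ℝ (fun y => pd b v y) x := fun b => diffAt_pd hU hv b hx
  have hterm : ∀ a b, DifferentiableAt ℝ (fun y => P y a b * pd a u y * pd b v y) x :=
    fun a b => ((hPd a b).mul (hud a)).mul (hvd b)
  have hrow : ∀ a, DifferentiableAt ℝ (fun y => ∑ b, P y a b * pd a u y * pd b v y) x :=
    fun a => DifferentiableAt.fun_sum (fun b _ => hterm a b)
  calc pd c (fun y => pbrak P u v y) x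
      = pd c (fun y => ∑ a, ∑ b, P y a b * pd a u y * pd b v y) x := rfl
    _ = ∑ a, pd c (fun y => ∑ b, P y a b * pd a u y * pd b v y) x :=
        pd_sum _ _ (fun a _ => hrow a) c
    _ = ∑ a, ∑ b, pd c (fun y => P y a b * pd a u y * pd b v y) x :=
        Finset.sum_congr rfl fun a _ => pd_sum _ _ (fun b _ => hterm a b) c
    _ = _ := by
        refine Finset.sum_congr rfl fun a _ => Finset.sum_congr rfl fun b _ => ?_
        rw [pd_mul ((hPd a b).fun_mul (hud a)) (hvd b) c, pd_mul (hPd a b) (hud a) c]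
        ring

/-- Jacobi identity for the Poisson bracket of smooth functions. -/
lemma jacobi_fun (hU : IsOpen U) (hP : IsPoissonMatrix P U)
    {u v w : (Fin n → ℝ) → ℝ} (hu : ContDiffOn ℝ (⊤ : ℕ∞) u U) (hv : ContDiffOn ℝ (⊤ : ℕ∞) v U)
    (hw : ContDiffOn ℝ (⊤ : ℕ∞) w U) (hx : x ∈ U) :
    pbrak P (fun y => pbrak P u v y) w x + pbrak P (fun y => pbrak P v w y) u x
      + pbrak P (fun y => pbrak P w u y) v x = 0 := by
  obtain ⟨hPs, hPa, hPj⟩ := hP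
  have e : ∀ (p q : (Fin n → ℝ) → ℝ), ContDiffOn ℝ (⊤ : ℕ∞) p U → ContDiffOn ℝ (⊤ : ℕ∞) q U →
      ∀ z : (Fin n → ℝ) → ℝ,
      pbrak P (fun y => pbrak P p q y) z x
        = ∑ c, ∑ d, P x c d * (∑ a, ∑ b, (pd c (fun y => P y a b) x * pd a p x * pd b q x
            + P x a b * pd c (fun y => pd a p y) x * pd b q x
            + P x a b * pd a p x * pd c (fun y => pd b q y) x)) * pd d z x := by
    intro p q hp hq z
    show (∑ c, ∑ d, P x c d * pd c (fun y => pbrak P p q y) x * pd d z x) = _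
    refine Finset.sum_congr rfl fun c _ => Finset.sum_congr rfl fun d _ => ?_
    rw [pd_pbrak hU hPs hp hq hx c]
  rw [e u v hu hv w, e v w hv hw u, e w u hw hu v]
  exact jacobi_alg (fun i j => P x i j) (fun l i j => pd l (fun y => P y i j) x)
    (hPa x hx) (hPj x hx)
    (fun a => pd a u x) (fun a => pd a v x) (fun a => pd a w x)
    (fun c a => pd c (fun y => pd a u y) x) (fun c a => pd c (fun y => pd a v y) x)
    (fun c a => pd c (fun y => pd a w y) x)
    (fun i j => pd_pd_symm hU hu hx i j) (fun i j => pd_pd_symm hU hv hx i j)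
    (fun i j => pd_pd_symm hU hw hx i j)

end pbrak

/-- The Poisson bracket of any two `F`-basic functions is constant along the Hamiltonian
vector fields `X_{f₁}, …, X_{f_r}` (Paragraph 4.3 of the paper): for a non-commutative
integrable system, `X_{f_i}[{g ∘ F, h ∘ F}] = {{g ∘ F, h ∘ F}, f_i} = 0`. -/
theorem bracket_of_basic_is_invariant {n s r : ℕ} (hr : r ≤ s)
    (U : Set (Fin n → ℝ)) (hU : IsOpen U)
    (P : (Fin n → ℝ) → Matrix (Fin n) (Fin n) ℝ) (hP : IsPoissonMatrix P U)
    (f : Fin s → (Fin n → ℝ) → ℝ) (hfs : ∀ j, ContDiffOn ℝ (⊤ : ℕ∞) (f j) U)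
    (hinv : ∀ (i : Fin r) (j : Fin s), ∀ x ∈ U, pbrak P (f (Fin.castLE hr i)) (f j) x = 0) :
    ∀ g h : (Fin s → ℝ) → ℝ, ContDiff ℝ (⊤ : ℕ∞) g → ContDiff ℝ (⊤ : ℕ∞) h →
      ∀ (i : Fin r), ∀ x ∈ U,
        (∑ a, ham P (f (Fin.castLE hr i)) x a
            * pd a (fun y => pbrak P (g ∘ fun y' j => f j y') (h ∘ fun y' j => f j y') y) x = 0)
        ∧ pbrak P
            (fun y => pbrak P (g ∘ fun y' j => f j y') (h ∘ fun y' j => f j y') y)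
            (f (Fin.castLE hr i)) x = 0 := by
  intro g h hg hh i x hx
  set fi : (Fin n → ℝ) → ℝ := f (Fin.castLE hr i) with hfi_def
  have hfi_s : ContDiffOn ℝ (⊤ : ℕ∞) fi U := hfs _
  have hFs : ContDiffOn ℝ (⊤ : ℕ∞) (fun y (j : Fin s) => f j y) U := contDiffOn_pi.2 hfs
  have hgF : ContDiffOn ℝ (⊤ : ℕ∞) (fun y => g (fun j => f j y)) U := hg.comp_contDiffOn hFs
  have hhF : ContDiffOn ℝ (⊤ : ℕ∞) (fun y => h (fun j => f j y)) U := hh.comp_contDiffOn hFs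
  -- bracket of `fi` with any `F`-basic function vanishes on `U`
  have hz : ∀ (g' : (Fin s → ℝ) → ℝ), ContDiff ℝ (⊤ : ℕ∞) g' → ∀ y ∈ U,
      pbrak P fi (fun y' => g' (fun j => f j y')) y = 0 := by
    intro g' hg' y hy
    rw [pbrak_basic_right fi g' f ((hg'.differentiable (by simp)).differentiableAt)
      (fun j => diffAt_of_contDiffOn hU (hfs j) (by simp) hy)]
    refine Finset.sum_eq_zero fun k _ => ?_
    rw [hinv i k y hy, mul_zero]
  have hz' : ∀ (g' : (Fin s → ℝ) → ℝ), ContDiff ℝ (⊤ : ℕ∞) g' → ∀ y ∈ U,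
      pbrak P (fun y' => g' (fun j => f j y')) fi y = 0 := by
    intro g' hg' y hy
    rw [pbrak_antisymm (hP.2.1 y hy), hz g' hg' y hy, neg_zero]
  -- second conjunct via the Jacobi identity
  have hc2 : pbrak P
      (fun y => pbrak P (g ∘ fun y' j => f j y') (h ∘ fun y' j => f j y') y) fi x = 0 := by
    have hJ := jacobi_fun hU hP hgF hhF hfi_s hx
    have t2 : pbrak P (fun y => pbrak P (fun y' => h (fun j => f j y')) fi y)
        (fun y' => g (fun j => f j y')) x = 0 :=
      pbrak_left_zero hU hx (fun y hy => hz' h hh y hy) _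
    have t3 : pbrak P (fun y => pbrak P fi (fun y' => g (fun j => f j y')) y)
        (fun y' => h (fun j => f j y')) x = 0 :=
      pbrak_left_zero hU hx (fun y hy => hz g hg y hy) _
    show pbrak P (fun y => pbrak P (fun y' => g (fun j => f j y'))
        (fun y' => h (fun j => f j y')) y) fi x = 0
    linarith [hJ, t2, t3]
  refine ⟨?_, hc2⟩
  have key : (∑ a, ham P fi x a
        * pd a (fun y => pbrak P (g ∘ fun y' j => f j y') (h ∘ fun y' j => f j y') y) x)
      = pbrak P (fun y => pbrak P (g ∘ fun y' j => f j y') (h ∘ fun y' j => f j y') y)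
          fi x := by
    show (∑ a, (∑ b, P x a b * pd b fi x)
        * pd a (fun y => pbrak P (g ∘ fun y' j => f j y') (h ∘ fun y' j => f j y') y) x) = _
    refine Finset.sum_congr rfl fun a _ => ?_
    rw [Finset.sum_mul]
    exact Finset.sum_congr rfl fun b _ => by ring
  rw [key, hc2]
end
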